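/- arXiv:1705.05298 — 4 statements merged into one kernel-verified Lean document; each statement's English description precedes it below -/
import Mathlib

section
/- For every permutation σ of {1,...,n} avoiding the classical pattern 132, the statistic mak(σ) equals maj(σ⁻¹). -/
namespace MahonianStats

open Finset

/-- The value sequence of a permutation of `{1,…,n}`: position `i` (0-indexed)
carries the value `σ(i+1) ∈ {1,…,n}`; positions `≥ n` carry the junk value `0`. -/
def pf {n : ℕ} (σ : Equiv.Perm (Fin n)) : ℕ → ℕ :=
  fun i => if h : i < n then ((σ ⟨i, h⟩ : Fin n) : ℕ) + 1 else 0

/-- The value sequence of a list (junk value `0` out of range). -/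
def lf (l : List ℕ) : ℕ → ℕ := fun i => l.getD i 0

/-- Descent positions (0-indexed). -/
def desSet (n : ℕ) (f : ℕ → ℕ) : Finset ℕ :=
  (range (n - 1)).filter fun i => f (i + 1) < f i

def des (n : ℕ) (f : ℕ → ℕ) : ℕ := (desSet n f).card

/-- Major index: sum of (1-indexed) descent positions. -/
def maj (n : ℕ) (f : ℕ → ℕ) : ℕ := ∑ i ∈ desSet n f, (i + 1)

/-- Occurrences of the vincular pattern (1-32). -/
def p1_32 (n : ℕ) (f : ℕ → ℕ) : ℕ :=
  ((range n ×ˢ range n).filter fun p =>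
    p.1 < p.2 ∧ p.2 + 1 < n ∧ f p.1 < f (p.2 + 1) ∧ f (p.2 + 1) < f p.2).card

/-- Occurrences of the vincular pattern (31-2). -/
def p31_2 (n : ℕ) (f : ℕ → ℕ) : ℕ :=
  ((range n ×ˢ range n).filter fun p =>
    p.1 + 1 < p.2 ∧ f (p.1 + 1) < f p.2 ∧ f p.2 < f p.1).card

/-- Occurrences of the vincular pattern (32-1). -/
def p32_1 (n : ℕ) (f : ℕ → ℕ) : ℕ :=
  ((range n ×ˢ range n).filter fun p =>
    p.1 + 1 < p.2 ∧ f p.2 < f (p.1 + 1) ∧ f (p.1 + 1) < f p.1).card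

/-- Occurrences of the vincular pattern (21-3). -/
def p21_3 (n : ℕ) (f : ℕ → ℕ) : ℕ :=
  ((range n ×ˢ range n).filter fun p =>
    p.1 + 1 < p.2 ∧ f (p.1 + 1) < f p.1 ∧ f p.1 < f p.2).card

/-- Occurrences of the vincular pattern (3-21). -/
def p3_21 (n : ℕ) (f : ℕ → ℕ) : ℕ :=
  ((range n ×ˢ range n).filter fun p =>
    p.1 < p.2 ∧ p.2 + 1 < n ∧ f (p.2 + 1) < f p.2 ∧ f p.2 < f p.1).card

/-- Occurrences of the vincular pattern (13-2). -/
def p13_2 (n : ℕ) (f : ℕ → ℕ) : ℕ :=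
  ((range n ×ˢ range n).filter fun p =>
    p.1 + 1 < p.2 ∧ f p.1 < f p.2 ∧ f p.2 < f (p.1 + 1)).card

/-- Occurrences of the vincular pattern (2-13). -/
def p2_13 (n : ℕ) (f : ℕ → ℕ) : ℕ :=
  ((range n ×ˢ range n).filter fun p =>
    p.1 < p.2 ∧ p.2 + 1 < n ∧ f p.2 < f p.1 ∧ f p.1 < f (p.2 + 1)).card

/-- Occurrences of the vincular pattern (2-31). -/
def p2_31 (n : ℕ) (f : ℕ → ℕ) : ℕ :=
  ((range n ×ˢ range n).filter fun p =>
    p.1 < p.2 ∧ p.2 + 1 < n ∧ f (p.2 + 1) < f p.1 ∧ f p.1 < f p.2).card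

/-- Number of inversions. -/
def invp (n : ℕ) (f : ℕ → ℕ) : ℕ :=
  ((range n ×ˢ range n).filter fun p => p.1 < p.2 ∧ f p.2 < f p.1).card

def mak (n : ℕ) (f : ℕ → ℕ) : ℕ := p1_32 n f + p31_2 n f + p32_1 n f + des n f

def mad (n : ℕ) (f : ℕ → ℕ) : ℕ := 2 * p2_31 n f + p31_2 n f + des n f

def Av123 (n : ℕ) (f : ℕ → ℕ) : Prop :=
  ¬ ∃ i j k, i < j ∧ j < k ∧ k < n ∧ f i < f j ∧ f j < f k
def Av132 (n : ℕ) (f : ℕ → ℕ) : Prop :=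
  ¬ ∃ i j k, i < j ∧ j < k ∧ k < n ∧ f i < f k ∧ f k < f j
def Av213 (n : ℕ) (f : ℕ → ℕ) : Prop :=
  ¬ ∃ i j k, i < j ∧ j < k ∧ k < n ∧ f j < f i ∧ f i < f k
def Av231 (n : ℕ) (f : ℕ → ℕ) : Prop :=
  ¬ ∃ i j k, i < j ∧ j < k ∧ k < n ∧ f k < f i ∧ f i < f j
def Av312 (n : ℕ) (f : ℕ → ℕ) : Prop :=
  ¬ ∃ i j k, i < j ∧ j < k ∧ k < n ∧ f j < f k ∧ f k < f i
def Av321 (n : ℕ) (f : ℕ → ℕ) : Prop :=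
  ¬ ∃ i j k, i < j ∧ j < k ∧ k < n ∧ f k < f j ∧ f j < f i

/-- The set of positions after `i` carrying values smaller than `f i`. -/
private def Sset (n : ℕ) (f : ℕ → ℕ) (i : ℕ) : Finset ℕ :=
  (range n).filter fun k => i < k ∧ f k < f i

private lemma mem_Sset {n : ℕ} {f : ℕ → ℕ} {i k : ℕ} :
    k ∈ Sset n f i ↔ k < n ∧ i < k ∧ f k < f i := by
  simp [Sset, Finset.mem_filter, Finset.mem_range, and_assoc]

private lemma mem_desSet {n : ℕ} {f : ℕ → ℕ} {i : ℕ} :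
    i ∈ desSet n f ↔ i + 1 < n ∧ f (i + 1) < f i := by
  simp only [desSet, Finset.mem_filter, Finset.mem_range]
  constructor
  · rintro ⟨h1, h2⟩; exact ⟨by omega, h2⟩
  · rintro ⟨h1, h2⟩; exact ⟨by omega, h2⟩

private lemma card_product_filter (s t : Finset ℕ) (Q : ℕ → ℕ → Prop)
    [∀ i j, Decidable (Q i j)] :
    ((s ×ˢ t).filter fun p => Q p.1 p.2).card = ∑ i ∈ s, (t.filter (Q i)).card := by
  rw [Finset.card_filter, Finset.sum_product]
  exact Finset.sum_congr rfl fun i _ => (Finset.card_filter _ _).symm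

section Key

variable {n : ℕ} {f g : ℕ → ℕ}

/-- On a 132-avoiding sequence, the set of values after a descent top that are
smaller than the top is a down-set `{1, …, c}`. -/
private lemma downset
    (hinj : ∀ i, i < n → ∀ j, j < n → f i = f j → i = j)
    (h1 : ∀ i, i < n → 1 ≤ f i)
    (h2 : ∀ i, i < n → f i ≤ n)
    (hg1 : ∀ v, v < n → g v < n)
    (hg2 : ∀ v, v < n → f (g v) = v + 1)
    (hav : Av132 n f)
    {i : ℕ} (hi1 : i + 1 < n) (hi2 : f (i + 1) < f i) :
    (Sset n f i).image f = Finset.Icc 1 ((Sset n f i).card) := by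
  have hSne : i + 1 ∈ Sset n f i := mem_Sset.mpr ⟨hi1, Nat.lt_succ_self i, hi2⟩
  have hdown : ∀ u ∈ (Sset n f i).image f, ∀ u', 1 ≤ u' → u' < u →
      u' ∈ (Sset n f i).image f := by
    intro u hu u' hu'1 hu'2
    obtain ⟨k, hk, hfk⟩ := Finset.mem_image.mp hu
    rw [mem_Sset] at hk
    have hfin : f i ≤ n := h2 i (by omega)
    have hu'n : u' - 1 < n := by omega
    have hjn : g (u' - 1) < n := hg1 _ hu'n
    have hfj : f (g (u' - 1)) = u' := by have := hg2 _ hu'n; omega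
    rcases lt_trichotomy (g (u' - 1)) i with hji | hji | hji
    · exact absurd ⟨g (u' - 1), i, k, hji, hk.2.1, hk.1, by omega, by omega⟩ hav
    · rw [hji] at hfj; omega
    · exact Finset.mem_image.mpr ⟨g (u' - 1), mem_Sset.mpr ⟨hjn, hji, by omega⟩, hfj⟩
  have hne : ((Sset n f i).image f).Nonempty := ⟨f (i + 1), Finset.mem_image_of_mem f hSne⟩
  set D := (Sset n f i).image f with hD
  set M := D.max' hne with hM
  have hDub : ∀ u ∈ D, 1 ≤ u := by
    intro u hu
    obtain ⟨k, hk, hfk⟩ := Finset.mem_image.mp hu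
    exact hfk ▸ h1 k (mem_Sset.mp hk).1
  have hDeq : D = Finset.Icc 1 M := by
    apply Finset.Subset.antisymm
    · exact fun u hu => Finset.mem_Icc.mpr ⟨hDub u hu, Finset.le_max' D u hu⟩
    · intro u hu
      rw [Finset.mem_Icc] at hu
      rcases eq_or_lt_of_le hu.2 with hcase | hcase
      · exact hcase ▸ D.max'_mem hne
      · exact hdown M (D.max'_mem hne) u hu.1 hcase
  have hcard : D.card = (Sset n f i).card := by
    apply Finset.card_image_of_injOn
    intro a ha b hb hab
    exact hinj a (mem_Sset.mp ha).1 b (mem_Sset.mp hb).1 hab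
  have hMcard : M = (Sset n f i).card := by
    have := hcard
    rw [hDeq, Nat.card_Icc] at this
    omega
  rw [hDeq, hMcard]

/-- From a descent, the card of `Sset` minus one is an inverse descent. -/
private lemma phi_mem
    (hinj : ∀ i, i < n → ∀ j, j < n → f i = f j → i = j)
    (h1 : ∀ i, i < n → 1 ≤ f i)
    (h2 : ∀ i, i < n → f i ≤ n)
    (hg1 : ∀ v, v < n → g v < n)
    (hg2 : ∀ v, v < n → f (g v) = v + 1)
    (hav : Av132 n f)
    {i : ℕ} (hi1 : i + 1 < n) (hi2 : f (i + 1) < f i) :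
    1 ≤ (Sset n f i).card ∧ (Sset n f i).card - 1 < n - 1 ∧
      g ((Sset n f i).card - 1 + 1) < g ((Sset n f i).card - 1) := by
  set c := (Sset n f i).card with hc
  have hIm := downset hinj h1 h2 hg1 hg2 hav hi1 hi2
  have hSne : i + 1 ∈ Sset n f i := mem_Sset.mpr ⟨hi1, Nat.lt_succ_self i, hi2⟩
  have hc1 : 1 ≤ c := Finset.card_pos.mpr ⟨i + 1, hSne⟩
  -- `c` is a value occurring after `i`
  have hcmem : c ∈ (Sset n f i).image f := by
    rw [hIm]; exact Finset.mem_Icc.mpr ⟨hc1, le_rfl⟩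
  obtain ⟨k, hkS, hfk⟩ := Finset.mem_image.mp hcmem
  rw [mem_Sset] at hkS
  have hcfi : c < f i := by omega
  have hfin : f i ≤ n := h2 i (by omega)
  have hcn : c < n := by omega
  -- position of the value `c + 1`
  set j := g c with hj
  have hjn : j < n := hg1 _ hcn
  have hfj : f j = c + 1 := hg2 _ hcn
  have hji : j ≤ i := by
    by_contra hcon
    push_neg at hcon
    rcases lt_or_eq_of_le (by omega : c + 1 ≤ f i) with hlt | heq
    · have : j ∈ Sset n f i := mem_Sset.mpr ⟨hjn, hcon, by omega⟩
      have : c + 1 ∈ (Sset n f i).image f := Finset.mem_image.mpr ⟨j, this, hfj⟩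
      rw [hIm, Finset.mem_Icc] at this
      omega
    · have : j = i := hinj j hjn i (by omega) (by omega)
      omega
  -- position of the value `c`
  have hgc : g (c - 1) = k := by
    have hc1n : c - 1 < n := by omega
    apply hinj _ (hg1 _ hc1n) _ hkS.1
    rw [hg2 _ hc1n, hfk]; omega
  have heq : c - 1 + 1 = c := by omega
  refine ⟨hc1, by omega, ?_⟩
  rw [heq, hgc]
  omega

/-- Injectivity of the descent-to-inverse-descent map. -/
private lemma phi_inj_aux
    (hinj : ∀ i, i < n → ∀ j, j < n → f i = f j → i = j)
    (h1 : ∀ i, i < n → 1 ≤ f i)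
    (h2 : ∀ i, i < n → f i ≤ n)
    (hg1 : ∀ v, v < n → g v < n)
    (hg2 : ∀ v, v < n → f (g v) = v + 1)
    (hav : Av132 n f)
    {i i' : ℕ} (hii' : i < i')
    (hi1 : i + 1 < n) (hi2 : f (i + 1) < f i)
    (hi1' : i' + 1 < n) (hi2' : f (i' + 1) < f i')
    (hcc : (Sset n f i).card = (Sset n f i').card) : False := by
  have hIm := downset hinj h1 h2 hg1 hg2 hav hi1 hi2
  have hIm' := downset hinj h1 h2 hg1 hg2 hav hi1' hi2'
  have hSne : i + 1 ∈ Sset n f i := mem_Sset.mpr ⟨hi1, Nat.lt_succ_self i, hi2⟩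
  have hmem : f (i + 1) ∈ (Sset n f i).image f := Finset.mem_image_of_mem f hSne
  rw [hIm, hcc, ← hIm'] at hmem
  obtain ⟨k, hkS, hfk⟩ := Finset.mem_image.mp hmem
  rw [mem_Sset] at hkS
  have : k = i + 1 := hinj k hkS.1 (i + 1) hi1 hfk
  omega

/-- Surjectivity: every inverse descent comes from a descent. -/
private lemma phi_surj
    (hinj : ∀ i, i < n → ∀ j, j < n → f i = f j → i = j)
    (h1 : ∀ i, i < n → 1 ≤ f i)
    (h2 : ∀ i, i < n → f i ≤ n)
    (hg1 : ∀ v, v < n → g v < n)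
    (hg2 : ∀ v, v < n → f (g v) = v + 1)
    (hav : Av132 n f)
    {v : ℕ} (hv : v < n - 1) (hvd : g (v + 1) < g v) :
    ∃ i, (i + 1 < n ∧ f (i + 1) < f i) ∧ (Sset n f i).card = v + 1 := by
  have hvn : v < n := by omega
  have hv1n : v + 1 < n := by omega
  set p := g (v + 1) with hp
  set r := g v with hr
  have hpn : p < n := hg1 _ hv1n
  have hrn : r < n := hg1 _ hvn
  have hfp : f p = v + 2 := hg2 _ hv1n
  have hfr : f r = v + 1 := hg2 _ hvn
  -- every position with value ≤ v+1 is after p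
  have hclaim : ∀ k, k < n → f k ≤ v + 1 → p < k := by
    intro k hkn hfk
    have hkp : k ≠ p := by intro hkp; rw [hkp] at hfk; omega
    rcases lt_or_gt_of_ne hkp with hlt | hgt
    · rcases eq_or_lt_of_le hfk with heq | hlt2
      · have : k = r := hinj k hkn r hrn (by omega)
        omega
      · exact absurd ⟨k, p, r, hlt, hvd, hrn, by omega, by omega⟩ hav
    · exact hgt
  -- the set of positions with small values
  set P := (range n).filter (fun k => f k ≤ v + 1) with hP
  have hrP : r ∈ P := by
    rw [hP, Finset.mem_filter, Finset.mem_range]; exact ⟨hrn, by omega⟩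
  have hPne : P.Nonempty := ⟨r, hrP⟩
  set q := P.min' hPne with hq
  have hqP : q ∈ P := P.min'_mem hPne
  rw [hP, Finset.mem_filter, Finset.mem_range] at hqP
  have hpq : p < q := hclaim q hqP.1 hqP.2
  set i := q - 1 with hi
  have hiq : i + 1 = q := by omega
  have hin : i < n := by omega
  have hfi : v + 1 < f i := by
    by_contra hcon
    push_neg at hcon
    have : i ∈ P := by
      rw [hP, Finset.mem_filter, Finset.mem_range]; exact ⟨hin, hcon⟩
    have := P.min'_le i this
    omega
  have hdesc1 : i + 1 < n := by omega
  have hdesc2 : f (i + 1) < f i := by rw [hiq]; omega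
  refine ⟨i, ⟨hdesc1, hdesc2⟩, ?_⟩
  set c := (Sset n f i).card with hc
  have hIm := downset hinj h1 h2 hg1 hg2 hav hdesc1 hdesc2
  -- v + 1 ∈ image
  have hv1mem : v + 1 ∈ (Sset n f i).image f := by
    apply Finset.mem_image.mpr
    refine ⟨r, mem_Sset.mpr ⟨hrn, ?_, by omega⟩, hfr⟩
    have := P.min'_le r hrP
    omega
  have hv1c : v + 1 ≤ c := by
    rw [hIm, Finset.mem_Icc] at hv1mem; omega
  -- v + 2 ∉ image
  have hv2mem : v + 2 ∉ (Sset n f i).image f := by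
    intro hmem
    obtain ⟨k, hkS, hfk⟩ := Finset.mem_image.mp hmem
    rw [mem_Sset] at hkS
    have : k = p := hinj k hkS.1 p hpn (by omega)
    omega
  have hcv2 : c < v + 2 := by
    by_contra hcon
    push_neg at hcon
    exact hv2mem (by rw [hIm]; exact Finset.mem_Icc.mpr ⟨by omega, hcon⟩)
  omega

/-- The statistic `mak` as a sum over descents. -/
private lemma mak_eq_sum
    (hinj : ∀ i, i < n → ∀ j, j < n → f i = f j → i = j)
    (hav : Av132 n f) :
    mak n f = ∑ i ∈ desSet n f, (Sset n f i).card := by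
  classical
  have h0 : p1_32 n f = 0 := by
    rw [p1_32, Finset.card_eq_zero, Finset.filter_eq_empty_iff]
    rintro ⟨a, b⟩ hab ⟨hab1, hb1, hf1, hf2⟩
    exact hav ⟨a, b, b + 1, hab1, Nat.lt_succ_self b, hb1, hf1, hf2⟩
  have h31 : p31_2 n f = ∑ i ∈ range n,
      ((range n).filter fun k => i + 1 < k ∧ f (i + 1) < f k ∧ f k < f i).card :=
    card_product_filter (range n) (range n)
      (fun i k => i + 1 < k ∧ f (i + 1) < f k ∧ f k < f i)
  have h32 : p32_1 n f = ∑ i ∈ range n,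
      ((range n).filter fun k => i + 1 < k ∧ f k < f (i + 1) ∧ f (i + 1) < f i).card :=
    card_product_filter (range n) (range n)
      (fun i k => i + 1 < k ∧ f k < f (i + 1) ∧ f (i + 1) < f i)
  have hdes : des n f = ∑ i ∈ desSet n f, 1 := by
    rw [des, Finset.card_eq_sum_ones]
  rw [mak, h0, zero_add, h31, h32, hdes, ← Finset.sum_add_distrib]
  -- restrict the outer sum to descents
  rw [← Finset.sum_subset (s₁ := desSet n f) (s₂ := range n) ?hsub ?hzero]
  case hsub =>
    intro i hi
    rw [mem_desSet] at hi
    exact Finset.mem_range.mpr (by omega)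
  case hzero =>
    intro i hi hnot
    have : ∀ k, k ∈ range n → ¬(i + 1 < k ∧ f (i + 1) < f k ∧ f k < f i) := by
      intro k hk hcon
      rw [Finset.mem_range] at hk
      exact hnot (mem_desSet.mpr ⟨by omega, by omega⟩)
    have h1 : ((range n).filter fun k => i + 1 < k ∧ f (i + 1) < f k ∧ f k < f i) = ∅ := by
      rw [Finset.filter_eq_empty_iff]; exact this
    have : ∀ k, k ∈ range n → ¬(i + 1 < k ∧ f k < f (i + 1) ∧ f (i + 1) < f i) := by
      intro k hk hcon
      rw [Finset.mem_range] at hk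
      exact hnot (mem_desSet.mpr ⟨by omega, by omega⟩)
    have h2 : ((range n).filter fun k => i + 1 < k ∧ f k < f (i + 1) ∧ f (i + 1) < f i) = ∅ := by
      rw [Finset.filter_eq_empty_iff]; exact this
    rw [h1, h2]; simp
  rw [← Finset.sum_add_distrib]
  apply Finset.sum_congr rfl
  intro i hi
  rw [mem_desSet] at hi
  -- union of the two filters is the strict part
  have hAB : ((range n).filter fun k => i + 1 < k ∧ f (i + 1) < f k ∧ f k < f i).card
      + ((range n).filter fun k => i + 1 < k ∧ f k < f (i + 1) ∧ f (i + 1) < f i).card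
      = ((range n).filter fun k => i + 1 < k ∧ f k < f i).card := by
    rw [← Finset.card_union_of_disjoint]
    · congr 1
      rw [← Finset.filter_or]
      apply Finset.filter_congr
      intro k hk
      rw [Finset.mem_range] at hk
      constructor
      · rintro (⟨ha, hb, hc⟩ | ⟨ha, hb, hc⟩)
        · exact ⟨ha, hc⟩
        · exact ⟨ha, by omega⟩
      · rintro ⟨ha, hb⟩
        have hne : f k ≠ f (i + 1) := by
          intro hcon
          have : k = i + 1 := hinj k hk (i + 1) hi.1 hcon
          omega
        rcases lt_or_gt_of_ne hne with hlt | hgt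
        · exact Or.inr ⟨ha, hlt, hi.2⟩
        · exact Or.inl ⟨ha, hgt, hb⟩
    · rw [Finset.disjoint_filter]
      rintro k hk ⟨ha, hb, hc⟩ ⟨ha', hb', hc'⟩
      omega
  rw [hAB]
  -- Sset = insert (i+1) strict-part
  have hins : Sset n f i = insert (i + 1)
      ((range n).filter fun k => i + 1 < k ∧ f k < f i) := by
    ext k
    rw [mem_Sset, Finset.mem_insert, Finset.mem_filter, Finset.mem_range]
    constructor
    · rintro ⟨hk1, hk2, hk3⟩
      rcases eq_or_lt_of_le (by omega : i + 1 ≤ k) with heq | hlt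
      · exact Or.inl heq.symm
      · exact Or.inr ⟨hk1, hlt, hk3⟩
    · rintro (heq | ⟨hk1, hk2, hk3⟩)
      · subst heq; exact ⟨hi.1, Nat.lt_succ_self i, hi.2⟩
      · exact ⟨hk1, by omega, hk3⟩
  rw [hins, Finset.card_insert_of_notMem (by simp)]

/-- Key combinatorial identity. -/
private lemma key
    (hinj : ∀ i, i < n → ∀ j, j < n → f i = f j → i = j)
    (h1 : ∀ i, i < n → 1 ≤ f i)
    (h2 : ∀ i, i < n → f i ≤ n)
    (hg1 : ∀ v, v < n → g v < n)
    (hg2 : ∀ v, v < n → f (g v) = v + 1)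
    (hav : Av132 n f) :
    mak n f = ∑ v ∈ (range (n - 1)).filter (fun v => g (v + 1) < g v), (v + 1) := by
  classical
  rw [mak_eq_sum hinj hav]
  apply Finset.sum_bij (fun i _ => (Sset n f i).card - 1)
  · intro a ha
    rw [mem_desSet] at ha
    obtain ⟨hc1, hc2, hc3⟩ := phi_mem hinj h1 h2 hg1 hg2 hav ha.1 ha.2
    rw [Finset.mem_filter, Finset.mem_range]
    exact ⟨hc2, hc3⟩
  · intro a1 ha1 a2 ha2 heq
    rw [mem_desSet] at ha1 ha2
    obtain ⟨hc1, _, _⟩ := phi_mem hinj h1 h2 hg1 hg2 hav ha1.1 ha1.2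
    obtain ⟨hc1', _, _⟩ := phi_mem hinj h1 h2 hg1 hg2 hav ha2.1 ha2.2
    have hcc : (Sset n f a1).card = (Sset n f a2).card := by omega
    by_contra hne
    rcases lt_or_gt_of_ne hne with hlt | hgt
    · exact phi_inj_aux hinj h1 h2 hg1 hg2 hav hlt ha1.1 ha1.2 ha2.1 ha2.2 hcc
    · exact phi_inj_aux hinj h1 h2 hg1 hg2 hav hgt ha2.1 ha2.2 ha1.1 ha1.2 hcc.symm
  · intro v hv
    rw [Finset.mem_filter, Finset.mem_range] at hv
    obtain ⟨i, hdesc, hci⟩ := phi_surj hinj h1 h2 hg1 hg2 hav hv.1 hv.2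
    exact ⟨i, mem_desSet.mpr hdesc, by omega⟩
  · intro a ha
    rw [mem_desSet] at ha
    obtain ⟨hc1, _, _⟩ := phi_mem hinj h1 h2 hg1 hg2 hav ha.1 ha.2
    omega

end Key

private lemma pf_lt {n : ℕ} (σ : Equiv.Perm (Fin n)) {i : ℕ} (h : i < n) :
    pf σ i = (σ ⟨i, h⟩ : ℕ) + 1 := by simp [pf, h]

/-- for every 132-avoiding permutation `σ` of `{1,…,n}`,
`mak(σ) = maj(σ⁻¹)`. -/

theorem stmt0 (n : ℕ) (σ : Equiv.Perm (Fin n)) (h : Av132 n (pf σ)) :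
    mak n (pf σ) = maj n (pf σ⁻¹) := by
  classical
  set g : ℕ → ℕ := fun v => pf σ⁻¹ v - 1 with hg
  have hg1 : ∀ v, v < n → g v < n := by
    intro v hv
    rw [hg]
    simp only []
    rw [pf_lt σ⁻¹ hv]
    simpa using (σ⁻¹ ⟨v, hv⟩).isLt
  have hg2 : ∀ v, v < n → pf σ (g v) = v + 1 := by
    intro v hv
    rw [hg]
    simp only []
    rw [pf_lt σ⁻¹ hv]
    have hlt : ((σ⁻¹ ⟨v, hv⟩ : Fin n) : ℕ) + 1 - 1 < n := by simpa using (σ⁻¹ ⟨v, hv⟩).isLt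
    rw [pf_lt σ hlt]
    congr 1
    have : (⟨((σ⁻¹ ⟨v, hv⟩ : Fin n) : ℕ) + 1 - 1, hlt⟩ : Fin n) = σ⁻¹ ⟨v, hv⟩ := by
      apply Fin.ext; simp
    rw [this]
    simp
  have hinj : ∀ i, i < n → ∀ j, j < n → pf σ i = pf σ j → i = j := by
    intro i hi j hj hij
    rw [pf_lt σ hi, pf_lt σ hj] at hij
    have : σ ⟨i, hi⟩ = σ ⟨j, hj⟩ := Fin.ext (by omega)
    have := σ.injective this
    exact congrArg Fin.val this
  have h1 : ∀ i, i < n → 1 ≤ pf σ i := by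
    intro i hi; rw [pf_lt σ hi]; omega
  have h2 : ∀ i, i < n → pf σ i ≤ n := by
    intro i hi; rw [pf_lt σ hi]
    have := (σ ⟨i, hi⟩).isLt; omega
  rw [key hinj h1 h2 hg1 hg2 h, maj]
  apply Finset.sum_congr
  · unfold desSet
    apply (Finset.filter_congr ?_).symm
    intro v hv
    rw [Finset.mem_range] at hv
    have hvn : v < n := by omega
    have hv1n : v + 1 < n := by omega
    have e1 := pf_lt σ⁻¹ hvn
    have e2 := pf_lt σ⁻¹ hv1n
    rw [hg]
    simp only [e1, e2]
    omega
  · intro x _; rfl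


end MahonianStats
end

section
/- There exists a bijection Φ on Dyck paths of semilength n such that stun(P) = Umass(Φ(P)) + dr(Φ(P)) for all P; hence Σ_{P∈Dyck_n} q^{stun(P)} = Σ_{P∈Dyck_n} q^{Umass(P)+dr(P)}. -/
namespace MahonianStats

open Finset

/-- Number of up-steps among the first `k` steps. -/
def ups (P : List Bool) (k : ℕ) : ℕ := (P.take k).count true

/-- Number of down-steps among the first `k` steps. -/
def downs (P : List Bool) (k : ℕ) : ℕ := (P.take k).count false

/-- `P` is a Dyck word (`true` = up-step, `false` = down-step). -/
def IsDyck (P : List Bool) : Prop :=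
  P.count true = P.count false ∧ ∀ k, downs P k ≤ ups P k

/-- Dyck paths of semilength `n`. -/
def DyckN (n : ℕ) (P : List Bool) : Prop := IsDyck P ∧ P.length = 2 * n

/-- Height of the path before step `i` (0-indexed). -/
def hB (P : List Bool) (i : ℕ) : ℕ := ups P i - downs P i

/-- Number of double rises `UU`. -/
def dr (P : List Bool) : ℕ :=
  ((Finset.range P.length).filter fun i =>
    P.getD i false = true ∧ P.getD (i + 1) false = true).card

/-- `sups`: sum over up-steps of `⌈h/2⌉`, `h` the height of the step's lowest point. -/
def sups (P : List Bool) : ℕ :=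
  ∑ i ∈ (Finset.range P.length).filter (fun i => P.getD i false = true), (hB P i + 1) / 2

/-- `sdowns`: sum over down-steps of `⌊h/2⌋`, `h` the height of the step's lowest point. -/
def sdowns (P : List Bool) : ℕ :=
  ∑ i ∈ (Finset.range P.length).filter (fun i => P.getD i false = false), hB P (i + 1) / 2

/-- `spea`: sum over peaks `UD` of (height of apex − 1). -/
def spea (P : List Bool) : ℕ :=
  ∑ i ∈ (Finset.range P.length).filter
      (fun i => i + 1 < P.length ∧ P.getD i false = true ∧ P.getD (i + 1) false = false),
    hB P i

/-- Index of the matching down-step of the up-step at index `i`: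
the least `j > i` at which the path returns to the height it had before step `i`. -/
noncomputable def matchD (P : List Bool) (i : ℕ) : ℕ :=
  sInf {j | i < j ∧ ups P (j + 1) + downs P i = ups P i + downs P (j + 1)}

/-- The mass statistic summed over all up-steps: for a double rise `s_i s_{i+1} = UU`,
factor the suffix after `s_i` as `U P₁ D P₂ D` and take `|P₂|/2`; other up-steps get `0`. -/
noncomputable def Umass (P : List Bool) : ℕ :=
  ∑ i ∈ (Finset.range P.length).filter
      (fun i => P.getD i false = true ∧ P.getD (i + 1) false = true),
    (matchD P i - matchD P (i + 1) - 1) / 2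

/-- Start of the tunnel of the valley at step `v`: the greatest `i ≤ v` such that the
height before step `i` equals the height after step `v`. -/
noncomputable def tunnelStart (P : List Bool) (v : ℕ) : ℕ :=
  sSup {i | i ≤ v ∧ ups P i + downs P (v + 1) = ups P (v + 1) + downs P i}

/-- `stun`: sum over valleys `DU` of half the length of the corresponding tunnel. -/
noncomputable def stun (P : List Bool) : ℕ :=
  ∑ v ∈ (Finset.range P.length).filter
      (fun v => P.getD v false = false ∧ P.getD (v + 1) false = true),
    (v + 1 - tunnelStart P v) / 2

def Hh (P : List Bool) (k : ℕ) : ℤ := (ups P k : ℤ) - (downs P k : ℤ)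

lemma count_tf (l : List Bool) : l.count true + l.count false = l.length := by
  induction l with
  | nil => simp
  | cons a l ih => cases a <;> simp [List.count_cons] <;> omega

lemma ups_append (P Q : List Bool) (k : ℕ) :
    ups (P ++ Q) k = ups P k + ups Q (k - P.length) := by
  simp [ups, List.take_append, List.count_append]

lemma downs_append (P Q : List Bool) (k : ℕ) :
    downs (P ++ Q) k = downs P k + downs Q (k - P.length) := by
  simp [downs, List.take_append, List.count_append]

lemma Hh_append (P Q : List Bool) (k : ℕ) :
    Hh (P ++ Q) k = Hh P k + Hh Q (k - P.length) := by
  simp [Hh, ups_append, downs_append]; push_cast; ring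

lemma ups_of_ge (P : List Bool) {k : ℕ} (h : P.length ≤ k) : ups P k = P.count true := by
  simp [ups, List.take_of_length_le h]

lemma downs_of_ge (P : List Bool) {k : ℕ} (h : P.length ≤ k) : downs P k = P.count false := by
  simp [downs, List.take_of_length_le h]

lemma Hh_zero (P : List Bool) : Hh P 0 = 0 := by simp [Hh, ups, downs]

lemma isDyck_iff (P : List Bool) :
    IsDyck P ↔ (∀ k, 0 ≤ Hh P k) ∧ Hh P P.length = 0 := by
  constructor
  · rintro ⟨h1, h2⟩
    refine ⟨fun k => ?_, ?_⟩
    · have := h2 k; simp [Hh]; omega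
    · simp [Hh, ups_of_ge P le_rfl, downs_of_ge P le_rfl]; omega
  · rintro ⟨h1, h2⟩
    constructor
    · have := h2; simp [Hh, ups_of_ge P le_rfl, downs_of_ge P le_rfl] at this; omega
    · intro k; have := h1 k; simp [Hh] at this; omega

lemma IsDyck.hh_nonneg {P : List Bool} (h : IsDyck P) (k : ℕ) : 0 ≤ Hh P k :=
  ((isDyck_iff P).1 h).1 k

lemma IsDyck.hh_len {P : List Bool} (h : IsDyck P) : Hh P P.length = 0 :=
  ((isDyck_iff P).1 h).2

lemma Hh_of_ge {P : List Bool} {k : ℕ} (h : P.length ≤ k) : Hh P k = Hh P P.length := by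
  simp [Hh, ups_of_ge P h, downs_of_ge P h, ups_of_ge P le_rfl, downs_of_ge P le_rfl]

lemma IsDyck.hh_eq_zero {P : List Bool} (h : IsDyck P) {k : ℕ} (hk : P.length ≤ k) :
    Hh P k = 0 := by rw [Hh_of_ge hk, h.hh_len]

lemma Hh_step (P : List Bool) (k : ℕ) (hk : k < P.length) :
    Hh P (k + 1) = Hh P k + (if P.getD k false = true then 1 else -1) := by
  have ht : P.take (k+1) = P.take k ++ [P.getD k false] := by
    rw [List.take_succ, List.getD_eq_getElem _ _ hk, List.getElem?_eq_getElem hk]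
    simp
  simp only [Hh, ups, downs, ht, List.count_append]
  cases hc : P.getD k false <;> simp [hc] <;> push_cast <;> ring

lemma Hh_step_ge (P : List Bool) (k : ℕ) (hk : P.length ≤ k) : Hh P (k + 1) = Hh P k := by
  rw [Hh_of_ge hk, Hh_of_ge (le_trans hk (Nat.le_succ k))]

lemma Hh_slope (P : List Bool) (k : ℕ) :
    Hh P (k + 1) = Hh P k + 1 ∨ Hh P (k + 1) = Hh P k - 1 ∨ Hh P (k + 1) = Hh P k := by
  rcases lt_or_ge k P.length with h | h
  · rcases Hh_step P k h with h'
    split_ifs at h' <;> omega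
  · right; right; exact Hh_step_ge P k h

/-- Discrete IVT, ascending. -/
lemma ivt_up (f : ℕ → ℤ)
    (hf : ∀ k, f (k+1) = f k + 1 ∨ f (k+1) = f k - 1 ∨ f (k+1) = f k)
    {a b : ℕ} {c : ℤ} (hab : a ≤ b) (h1 : f a ≤ c) (h2 : c ≤ f b) :
    ∃ k, a ≤ k ∧ k ≤ b ∧ f k = c := by
  induction b with
  | zero =>
    have ha : a = 0 := by omega
    subst ha
    exact ⟨0, le_rfl, le_rfl, by omega⟩
  | succ b ih =>
    rcases Nat.eq_or_lt_of_le hab with h | h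
    · exact ⟨a, le_rfl, by omega, by rw [← h] at h2; omega⟩
    · have hab' : a ≤ b := by omega
      rcases le_or_gt c (f b) with h3 | h3
      · obtain ⟨k, hk⟩ := ih hab' h3
        exact ⟨k, hk.1, hk.2.1.trans (Nat.le_succ b), hk.2.2⟩
      · have := hf b
        exact ⟨b + 1, by omega, le_rfl, by omega⟩

lemma ivt_down (f : ℕ → ℤ)
    (hf : ∀ k, f (k+1) = f k + 1 ∨ f (k+1) = f k - 1 ∨ f (k+1) = f k)
    {a b : ℕ} {c : ℤ} (hab : a ≤ b) (h1 : c ≤ f a) (h2 : f b ≤ c) :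
    ∃ k, a ≤ k ∧ k ≤ b ∧ f k = c := by
  obtain ⟨k, hk1, hk2, hk3⟩ := ivt_up (fun k => -(f k))
    (fun k => by
      rcases hf k with h | h | h <;>
        (show -(f (k+1)) = -(f k) + 1 ∨ -(f (k+1)) = -(f k) - 1 ∨ -(f (k+1)) = -(f k)) <;> omega)
    (c := -c) hab (show -(f a) ≤ -c by omega) (show -c ≤ -(f b) by omega)
  exact ⟨k, hk1, hk2, by omega⟩


inductive TT : Type
  | leaf : TT
  | node : TT → TT → TT

namespace TT
def size : TT → ℕ
  | leaf => 0
  | node a b => a.size + b.size + 1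

def extra : TT → ℕ
  | leaf => 0
  | node _ a2 => a2.size + 1

def g : TT → ℕ
  | leaf => 0
  | node a b => g a + g b + extra a
end TT

def fF : TT → List Bool
  | TT.leaf => []
  | TT.node a b => true :: (fF a ++ false :: fF b)

def fL : TT → List Bool
  | TT.leaf => []
  | TT.node a b => fL a ++ (true :: (fL b ++ [false]))

lemma length_fF (t : TT) : (fF t).length = 2 * t.size := by
  induction t with
  | leaf => simp [fF, TT.size]
  | node a b iha ihb => simp [fF, TT.size, iha, ihb]; ring

lemma length_fL (t : TT) : (fL t).length = 2 * t.size := by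
  induction t with
  | leaf => simp [fL, TT.size]
  | node a b iha ihb => simp [fL, TT.size, iha, ihb]; ring

lemma Hh_cons_true (A : List Bool) (k : ℕ) :
    Hh (true :: A) k = (if k = 0 then 0 else 1) + Hh A (k - 1) := by
  have : (true :: A) = [true] ++ A := rfl
  rw [this, Hh_append]
  rcases Nat.eq_zero_or_pos k with h | h
  · simp [h, Hh_zero]
  · have : Hh [true] k = 1 := by
      have h1 : (1:ℕ) ≤ k := h
      rw [Hh_of_ge (by simpa using h1)]
      simp [Hh, ups, downs]
    rw [this, if_neg (by omega), show [true].length = 1 from rfl]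

lemma Hh_cons_false (A : List Bool) (k : ℕ) :
    Hh (false :: A) k = (if k = 0 then 0 else -1) + Hh A (k - 1) := by
  have : (false :: A) = [false] ++ A := rfl
  rw [this, Hh_append]
  rcases Nat.eq_zero_or_pos k with h | h
  · simp [h, Hh_zero]
  · have : Hh [false] k = -1 := by
      have h1 : (1:ℕ) ≤ k := h
      rw [Hh_of_ge (by simpa using h1)]
      simp [Hh, ups, downs]
    rw [this, if_neg (by omega), show [false].length = 1 from rfl]

/-- Dyck word `true :: A ++ false :: B` heights: low range. -/
lemma Hh_Q_le {A B : List Bool} {k : ℕ} (h1 : 1 ≤ k) (h2 : k ≤ A.length + 1) :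
    Hh (true :: (A ++ false :: B)) k = 1 + Hh A (k - 1) := by
  rw [Hh_cons_true, if_neg (by omega)]
  have : A ++ false :: B = A ++ ([false] ++ B) := rfl
  rw [this, Hh_append, Hh_append]
  have e1 : k - 1 - A.length = 0 := by omega
  rw [e1, show (0:ℕ) - [false].length = 0 from rfl]
  simp only [Hh_zero]
  ring

lemma Hh_Q_ge {A B : List Bool} (hA : IsDyck A) {k : ℕ} (h2 : A.length + 2 ≤ k) :
    Hh (true :: (A ++ false :: B)) k = Hh B (k - (A.length + 2)) := by
  rw [Hh_cons_true, if_neg (by omega)]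
  have : A ++ false :: B = A ++ ([false] ++ B) := rfl
  rw [this, Hh_append, Hh_append]
  rw [hA.hh_eq_zero (by omega)]
  have hf : Hh [false] (k - 1 - A.length) = -1 := by
    rw [Hh_of_ge (by simp; omega)]; simp [Hh, ups, downs]
  rw [hf]
  have : k - 1 - A.length - [false].length = k - (A.length + 2) := by simp; omega
  rw [this]; ring

lemma Hh_L_le {B A : List Bool} {k : ℕ} (h : k ≤ B.length) :
    Hh (B ++ (true :: (A ++ [false]))) k = Hh B k := by
  rw [Hh_append]
  have : k - B.length = 0 := by omega
  rw [this, Hh_zero, add_zero]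

lemma Hh_L_mid {B A : List Bool} (hB : IsDyck B) {k : ℕ}
    (h1 : B.length + 1 ≤ k) (h2 : k ≤ B.length + A.length + 1) :
    Hh (B ++ (true :: (A ++ [false]))) k = 1 + Hh A (k - B.length - 1) := by
  rw [Hh_append, hB.hh_eq_zero (by omega), Hh_cons_true, if_neg (by omega),
    Hh_append]
  have : k - B.length - 1 - A.length = 0 := by omega
  rw [this, Hh_zero]
  ring

lemma isDyck_nil : IsDyck ([] : List Bool) :=
  ⟨rfl, fun k => by simp [ups, downs]⟩

lemma isDyck_Q {A B : List Bool} (hA : IsDyck A) (hB : IsDyck B) :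
    IsDyck (true :: (A ++ false :: B)) := by
  rw [isDyck_iff]
  constructor
  · intro k
    rcases Nat.eq_zero_or_pos k with h | h
    · simp [h, Hh_zero]
    · rcases le_or_gt k (A.length + 1) with h2 | h2
      · rw [Hh_Q_le h h2]; have := hA.hh_nonneg (k-1); omega
      · rw [Hh_Q_ge hA (by omega)]; exact hB.hh_nonneg _
  · have hl : (true :: (A ++ false :: B)).length = A.length + 2 + B.length := by
      simp; omega
    rw [hl, Hh_Q_ge hA (by omega)]
    have : A.length + 2 + B.length - (A.length + 2) = B.length := by omega
    rw [this, hB.hh_len]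

lemma isDyck_L {B A : List Bool} (hB : IsDyck B) (hA : IsDyck A) :
    IsDyck (B ++ (true :: (A ++ [false]))) := by
  rw [isDyck_iff]
  have hl : (B ++ (true :: (A ++ [false]))).length = B.length + A.length + 2 := by
    simp; omega
  constructor
  · intro k
    rcases le_or_gt k B.length with h | h
    · rw [Hh_L_le h]; exact hB.hh_nonneg _
    · rcases le_or_gt k (B.length + A.length + 1) with h2 | h2
      · rw [Hh_L_mid hB (by omega) h2]; have := hA.hh_nonneg (k - B.length - 1); omega
      · have : (B ++ (true :: (A ++ [false]))).length ≤ k := by omega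
        rw [Hh_of_ge this, hl, Hh_append, hB.hh_eq_zero (by omega), Hh_cons_true,
          if_neg (by omega), Hh_append, hA.hh_eq_zero (by omega)]
        have hf : Hh [false] (B.length + A.length + 2 - B.length - 1 - A.length) = -1 := by
          rw [Hh_of_ge (by simp; omega)]; simp [Hh, ups, downs]
        rw [hf]; omega
  · rw [hl, Hh_append, hB.hh_eq_zero (by omega), Hh_cons_true, if_neg (by omega),
      Hh_append, hA.hh_eq_zero (by omega)]
    have hf : Hh [false] (B.length + A.length + 2 - B.length - 1 - A.length) = -1 := by
      rw [Hh_of_ge (by simp; omega)]; simp [Hh, ups, downs]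
    rw [hf]; ring

lemma isDyck_fF (t : TT) : IsDyck (fF t) := by
  induction t with
  | leaf => exact isDyck_nil
  | node a b iha ihb => exact isDyck_Q iha ihb

lemma isDyck_fL (t : TT) : IsDyck (fL t) := by
  induction t with
  | leaf => exact isDyck_nil
  | node a b iha ihb => exact isDyck_L iha ihb


lemma getD_Q_zero (A B : List Bool) : (true :: (A ++ false :: B)).getD 0 false = true := rfl

lemma getD_Q_mid (A B : List Bool) {w : ℕ} (h1 : 1 ≤ w) (h2 : w ≤ A.length) :
    (true :: (A ++ false :: B)).getD w false = A.getD (w - 1) false := by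
  rcases w with _ | w
  · omega
  · simp only [List.getD_cons_succ, Nat.add_sub_cancel]
    rw [List.getD_append _ _ _ _ (by omega)]

lemma getD_Q_sep (A B : List Bool) : (true :: (A ++ false :: B)).getD (A.length + 1) false = false := by
  simp only [List.getD_cons_succ]
  rw [List.getD_append_right _ _ _ _ (le_refl _), Nat.sub_self]
  rfl

lemma getD_Q_hi (A B : List Bool) {w : ℕ} (h : A.length + 2 ≤ w) :
    (true :: (A ++ false :: B)).getD w false = B.getD (w - (A.length + 2)) false := by
  obtain ⟨w', rfl⟩ := Nat.exists_eq_add_of_le h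
  have e : A.length + 2 + w' = (A.length + 1 + w') + 1 := by omega
  rw [e, List.getD_cons_succ, List.getD_append_right _ _ _ _ (by omega)]
  have e2 : A.length + 1 + w' - A.length = w' + 1 := by omega
  rw [e2, List.getD_cons_succ]
  congr 1
  omega

lemma getD_L_lo (B A : List Bool) {w : ℕ} (h : w < B.length) :
    (B ++ (true :: (A ++ [false]))).getD w false = B.getD w false := by
  rw [List.getD_append _ _ _ _ h]

lemma getD_L_sep (B A : List Bool) :
    (B ++ (true :: (A ++ [false]))).getD B.length false = true := by
  rw [List.getD_append_right _ _ _ _ (le_refl _)]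
  simp

lemma getD_L_mid (B A : List Bool) {w : ℕ} (h1 : B.length + 1 ≤ w) (h2 : w ≤ B.length + A.length) :
    (B ++ (true :: (A ++ [false]))).getD w false = A.getD (w - B.length - 1) false := by
  rw [List.getD_append_right _ _ _ _ (by omega)]
  obtain ⟨w', hw⟩ := Nat.exists_eq_add_of_le h1
  rw [hw]
  have e : B.length + 1 + w' - B.length = w' + 1 := by omega
  rw [e, List.getD_cons_succ, Nat.add_sub_cancel, List.getD_append _ _ _ _ (by omega)]

lemma getD_L_last (B A : List Bool) :
    (B ++ (true :: (A ++ [false]))).getD (B.length + A.length + 1) false = false := by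
  rw [List.getD_append_right _ _ _ _ (by omega)]
  have e : B.length + A.length + 1 - B.length = A.length + 1 := by omega
  rw [e, List.getD_cons_succ, List.getD_append_right _ _ _ _ (by omega)]
  simp

lemma getD_oob (P : List Bool) {w : ℕ} (h : P.length ≤ w) : P.getD w false = false :=
  List.getD_eq_default _ _ h

/-- Nonempty Dyck starts with an up-step. -/
lemma IsDyck.head_true {A : List Bool} (hA : IsDyck A) (hne : A ≠ []) :
    A.getD 0 false = true := by
  have hl : 0 < A.length := List.length_pos_iff.2 hne
  by_contra h
  have h2 := Hh_step A 0 hl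
  rw [if_neg h, Hh_zero] at h2
  norm_num at h2
  have := hA.hh_nonneg 1
  omega

/-- Nonempty Dyck ends with a down-step. -/
lemma IsDyck.last_false {A : List Bool} (hA : IsDyck A) (hne : A ≠ []) :
    A.getD (A.length - 1) false = false := by
  have hl : 0 < A.length := List.length_pos_iff.2 hne
  by_contra h
  have hs := Hh_step A (A.length - 1) (by omega)
  rw [if_pos (by simpa using h)] at hs
  have e : A.length - 1 + 1 = A.length := by omega
  rw [e, hA.hh_len] at hs
  have := hA.hh_nonneg (A.length - 1)
  omega

lemma matchD_eq_sInf (P : List Bool) (i : ℕ) :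
    matchD P i = sInf {j | i < j ∧ Hh P (j+1) = Hh P i} := by
  unfold matchD
  congr 1
  ext j
  simp only [Set.mem_setOf_eq, Hh]
  constructor <;> rintro ⟨h1, h2⟩ <;> exact ⟨h1, by omega⟩

lemma tunnelStart_eq_sSup (P : List Bool) (v : ℕ) :
    tunnelStart P v = sSup {i | i ≤ v ∧ Hh P i = Hh P (v+1)} := by
  unfold tunnelStart
  congr 1
  ext i
  simp only [Set.mem_setOf_eq, Hh]
  constructor <;> rintro ⟨h1, h2⟩ <;> exact ⟨h1, by omega⟩

lemma matchD_eq {P : List Bool} {i j : ℕ} (hij : i < j) (hj : Hh P (j+1) = Hh P i)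
    (hmin : ∀ j', i < j' → j' < j → Hh P (j'+1) ≠ Hh P i) : matchD P i = j := by
  rw [matchD_eq_sInf]
  have hmem : j ∈ {j | i < j ∧ Hh P (j+1) = Hh P i} := ⟨hij, hj⟩
  refine le_antisymm (Nat.sInf_le hmem) ?_
  by_contra h
  push_neg at h
  have hin := Nat.sInf_mem (⟨j, hmem⟩ : Set.Nonempty _)
  exact hmin _ hin.1 h hin.2

lemma tunnelStart_eq {P : List Bool} {v i : ℕ} (hi : i ≤ v) (h : Hh P i = Hh P (v+1))
    (hmax : ∀ i', i < i' → i' ≤ v → Hh P i' ≠ Hh P (v+1)) : tunnelStart P v = i := by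
  rw [tunnelStart_eq_sSup]
  have hmem : i ∈ {i | i ≤ v ∧ Hh P i = Hh P (v+1)} := ⟨hi, h⟩
  refine le_antisymm ?_ (le_csSup ⟨v, fun x hx => hx.1⟩ hmem)
  refine csSup_le ⟨i, hmem⟩ fun x hx => ?_
  by_contra hc
  push_neg at hc
  exact hmax x hc hx.1 hx.2

/-- Every up-step in a Dyck word has a matching down-step within the word. -/
lemma matchD_spec {A : List Bool} (hA : IsDyck A) {i : ℕ} (hi : i < A.length)
    (hu : A.getD i false = true) :
    i < matchD A i ∧ matchD A i < A.length ∧ Hh A (matchD A i + 1) = Hh A i ∧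
      ∀ j', i < j' → j' < matchD A i → Hh A (j'+1) ≠ Hh A i := by
  have hstep : Hh A (i+1) = Hh A i + 1 := by rw [Hh_step A i hi, if_pos hu]
  obtain ⟨k, hk1, hk2, hk3⟩ := ivt_down (Hh A) (Hh_slope A) (a := i+1) (b := A.length)
    (c := Hh A i) (by omega) (by omega) (by rw [hA.hh_len]; exact hA.hh_nonneg i)
  have hki : k ≠ i + 1 := fun h => by rw [h] at hk3; omega
  set S : Set ℕ := {j | i < j ∧ Hh A (j+1) = Hh A i} with hS
  have hmem : k - 1 ∈ S := by
    constructor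
    · show i < k - 1; omega
    · show Hh A (k - 1 + 1) = Hh A i; rw [show k - 1 + 1 = k by omega]; exact hk3
  have hne : S.Nonempty := ⟨k - 1, hmem⟩
  have h1 : matchD A i ∈ S := by rw [matchD_eq_sInf]; exact Nat.sInf_mem hne
  refine ⟨h1.1, ?_, h1.2, fun j' h2 h3 hc => ?_⟩
  · have : matchD A i ≤ k - 1 := by rw [matchD_eq_sInf]; exact Nat.sInf_le hmem
    omega
  · rw [matchD_eq_sInf] at h3
    exact Nat.notMem_of_lt_sInf h3 ⟨h2, hc⟩


lemma matchD_Q_zero {A B : List Bool} (hA : IsDyck A) :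
    matchD (true :: (A ++ false :: B)) 0 = A.length + 1 := by
  refine matchD_eq (by omega) ?_ ?_
  · rw [Hh_Q_ge hA (by omega), Hh_zero]
    have : A.length + 1 + 1 - (A.length + 2) = 0 := by omega
    rw [this, Hh_zero]
  · intro j' h1 h2
    rw [Hh_Q_le (by omega) (by omega), Hh_zero]
    have := hA.hh_nonneg (j' + 1 - 1)
    omega

lemma matchD_Q_A {A B : List Bool} (hA : IsDyck A) {i : ℕ} (hi : i < A.length)
    (hu : A.getD i false = true) :
    matchD (true :: (A ++ false :: B)) (1 + i) = 1 + matchD A i := by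
  obtain ⟨hm1, hm2, hm3, hm4⟩ := matchD_spec hA hi hu
  refine matchD_eq (by omega) ?_ ?_
  · rw [Hh_Q_le (k := 1 + matchD A i + 1) (by omega) (by omega),
      Hh_Q_le (k := 1 + i) (by omega) (by omega)]
    have e1 : 1 + matchD A i + 1 - 1 = matchD A i + 1 := by omega
    have e2 : 1 + i - 1 = i := by omega
    rw [e1, e2, hm3]
  · intro j' h1 h2
    rw [Hh_Q_le (k := j' + 1) (by omega) (by omega),
      Hh_Q_le (k := 1 + i) (by omega) (by omega)]
    have e1 : j' + 1 - 1 = (j' - 1) + 1 := by omega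
    have e2 : 1 + i - 1 = i := by omega
    rw [e1, e2]
    have := hm4 (j' - 1) (by omega) (by omega)
    omega

lemma matchD_Q_B {A B : List Bool} (hA : IsDyck A) (hB : IsDyck B) {i : ℕ} (hi : i < B.length)
    (hu : B.getD i false = true) :
    matchD (true :: (A ++ false :: B)) (A.length + 2 + i) = A.length + 2 + matchD B i := by
  obtain ⟨hm1, hm2, hm3, hm4⟩ := matchD_spec hB hi hu
  refine matchD_eq (by omega) ?_ ?_
  · rw [Hh_Q_ge hA (by omega), Hh_Q_ge hA (by omega)]
    have e1 : A.length + 2 + matchD B i + 1 - (A.length + 2) = matchD B i + 1 := by omega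
    have e2 : A.length + 2 + i - (A.length + 2) = i := by omega
    rw [e1, e2, hm3]
  · intro j' h1 h2
    rw [Hh_Q_ge hA (by omega), Hh_Q_ge hA (by omega)]
    have e1 : j' + 1 - (A.length + 2) = (j' - (A.length + 2)) + 1 := by omega
    have e2 : A.length + 2 + i - (A.length + 2) = i := by omega
    rw [e1, e2]
    exact hm4 _ (by omega) (by omega)

lemma tunnelStart_spec {A : List Bool} (hA : IsDyck A) {j : ℕ} (hj : j < A.length)
    (hd : A.getD j false = false) :
    tunnelStart A j ≤ j ∧ Hh A (tunnelStart A j) = Hh A (j+1) ∧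
      ∀ i', tunnelStart A j < i' → i' ≤ j → Hh A i' ≠ Hh A (j+1) := by
  have hstep : Hh A (j+1) = Hh A j - 1 := by
    have e : (if (false : Bool) = true then (1:ℤ) else -1) = -1 := rfl
    rw [Hh_step A j hj, hd, e]; ring
  obtain ⟨k, hk1, hk2, hk3⟩ := ivt_up (Hh A) (Hh_slope A) (a := 0) (b := j)
    (c := Hh A (j+1)) (by omega) (by rw [Hh_zero]; exact hA.hh_nonneg _) (by omega)
  set S : Set ℕ := {i | i ≤ j ∧ Hh A i = Hh A (j+1)} with hS
  have hmem : k ∈ S := ⟨hk2, hk3⟩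
  have hne : S.Nonempty := ⟨k, hmem⟩
  have hbdd : BddAbove S := ⟨j, fun x hx => hx.1⟩
  have h1 : tunnelStart A j ∈ S := by rw [tunnelStart_eq_sSup]; exact Nat.sSup_mem hne hbdd
  refine ⟨h1.1, h1.2, fun i' h2 h3 hc => ?_⟩
  rw [tunnelStart_eq_sSup, ← hS] at h2
  exact absurd (le_csSup hbdd (⟨h3, hc⟩ : i' ∈ S)) (by omega)

lemma tunnelStart_L_lo {B A : List Bool} {v : ℕ} (hv : v < B.length) :
    tunnelStart (B ++ (true :: (A ++ [false]))) v = tunnelStart B v := by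
  rw [tunnelStart_eq_sSup, tunnelStart_eq_sSup]
  congr 1
  ext i
  simp only [Set.mem_setOf_eq]
  constructor <;> rintro ⟨h1, h2⟩ <;> refine ⟨h1, ?_⟩
  · rwa [Hh_L_le (by omega : i ≤ B.length), Hh_L_le (by omega : v + 1 ≤ B.length)] at h2
  · rwa [Hh_L_le (by omega : i ≤ B.length), Hh_L_le (by omega : v + 1 ≤ B.length)]

lemma tunnelStart_L_sep {B' A' A : List Bool} (hB' : IsDyck B') (hA' : IsDyck A')
    (hA : IsDyck A) :
    tunnelStart ((B' ++ (true :: (A' ++ [false]))) ++ (true :: (A ++ [false])))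
      ((B' ++ (true :: (A' ++ [false]))).length - 1) = B'.length := by
  set B := B' ++ (true :: (A' ++ [false])) with hBdef
  have hB : IsDyck B := isDyck_L hB' hA'
  have hlen : B.length = B'.length + A'.length + 2 := by simp [hBdef]; omega
  have hv1 : B.length - 1 + 1 = B.length := by omega
  have e2 : Hh (B ++ (true :: (A ++ [false]))) B.length = 0 := by
    rw [Hh_L_le (le_refl _), hB.hh_len]
  refine tunnelStart_eq (by omega) ?_ ?_
  · have e1 : Hh (B ++ (true :: (A ++ [false]))) B'.length = Hh B' B'.length := by
      rw [Hh_L_le (by omega), hBdef, Hh_L_le (le_refl _)]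
    rw [hv1, e1, e2, hB'.hh_len]
  · intro i' h1 h2
    have e1 : Hh (B ++ (true :: (A ++ [false]))) i' = 1 + Hh A' (i' - B'.length - 1) := by
      rw [Hh_L_le (by omega), hBdef, Hh_L_mid hB' (by omega) (by omega)]
    rw [hv1, e1, e2]
    have := hA'.hh_nonneg (i' - B'.length - 1)
    omega

lemma tunnelStart_L_mid {B A : List Bool} (hB : IsDyck B) (hA : IsDyck A) {j : ℕ}
    (hj2 : j + 1 < A.length) (hd : A.getD j false = false) :
    tunnelStart (B ++ (true :: (A ++ [false]))) (B.length + 1 + j) =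
      B.length + 1 + tunnelStart A j := by
  obtain ⟨hm1, hm2, hm3⟩ := tunnelStart_spec hA (by omega) hd
  refine tunnelStart_eq (by omega) ?_ ?_
  · rw [Hh_L_mid hB (by omega) (by omega), Hh_L_mid hB (by omega) (by omega)]
    have e1 : B.length + 1 + tunnelStart A j - B.length - 1 = tunnelStart A j := by omega
    have e2 : B.length + 1 + j + 1 - B.length - 1 = j + 1 := by omega
    rw [e1, e2, hm2]
  · intro i' h1 h2
    rw [Hh_L_mid hB (by omega) (by omega), Hh_L_mid hB (by omega) (by omega)]
    have e2 : B.length + 1 + j + 1 - B.length - 1 = j + 1 := by omega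
    rw [e2]
    have := hm3 (i' - B.length - 1) (by omega) (by omega)
    omega


lemma lt_of_getD_true {P : List Bool} {i : ℕ} (h : P.getD i false = true) : i < P.length := by
  by_contra hc
  rw [getD_oob P (by omega)] at h
  exact Bool.false_ne_true h

lemma length_Q (A B : List Bool) : (true :: (A ++ false :: B)).length = (A.length + 2) + B.length := by
  simp only [List.length_cons, List.length_append]; omega

lemma length_L (B A : List Bool) : (B ++ (true :: (A ++ [false]))).length = B.length + (A.length + 2) := by
  simp only [List.length_cons, List.length_append, List.length_nil]

lemma sum_shape_Q (f : ℕ → ℕ) (a b : ℕ) :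
    ∑ i ∈ Finset.range ((a+2)+b), f i =
      ((f 0 + ∑ w ∈ Finset.range a, f (1+w)) + f (1+a)) + ∑ w ∈ Finset.range b, f ((a+2)+w) := by
  rw [Finset.sum_range_add]
  congr 1
  rw [show a+2 = (1+a)+1 from by omega, Finset.sum_range_succ]
  congr 1
  rw [Finset.sum_range_add, Finset.sum_range_one]

lemma sum_shape_L (f : ℕ → ℕ) (b a : ℕ) :
    ∑ i ∈ Finset.range (b+(a+2)), f i =
      (∑ i ∈ Finset.range b, f i) +
        ((f (b+0) + ∑ w ∈ Finset.range a, f (b+(1+w))) + f (b+(1+a))) := by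
  rw [Finset.sum_range_add]
  congr 1
  rw [show a+2 = (1+a)+1 from by omega, Finset.sum_range_succ]
  congr 1
  rw [Finset.sum_range_add, Finset.sum_range_one]

lemma getD_Q_mid' (A B : List Bool) {w : ℕ} (h2 : w < A.length) :
    (true :: (A ++ false :: B)).getD (1 + w + 1) false = A.getD (w + 1) false := by
  rcases Nat.lt_or_ge (w + 1) A.length with h | h
  · rw [show 1 + w + 1 = 1 + (w + 1) by omega, getD_Q_mid A B (by omega) (by omega)]
    congr 1
    omega
  · have hw : w + 1 = A.length := by omega
    rw [show 1 + w + 1 = A.length + 1 by omega, getD_Q_sep, hw, getD_oob A (by omega)]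

lemma getD_Q_hi' (A B : List Bool) {w : ℕ} (h2 : w < B.length) :
    (true :: (A ++ false :: B)).getD (A.length + 2 + w + 1) false = B.getD (w + 1) false := by
  rcases Nat.lt_or_ge (w + 1) B.length with h | h
  · rw [show A.length + 2 + w + 1 = A.length + 2 + (w+1) by omega, getD_Q_hi A B (by omega)]
    congr 1
    omega
  · have hoob : (true :: (A ++ false :: B)).length ≤ A.length + 2 + w + 1 := by
      rw [length_Q]; omega
    rw [getD_oob _ hoob, getD_oob B (by omega)]

lemma getD_L_mid' (B A : List Bool) {w : ℕ} (h2 : w < A.length) :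
    (B ++ (true :: (A ++ [false]))).getD (B.length + (1 + w) + 1) false = A.getD (w + 1) false := by
  rcases Nat.lt_or_ge (w + 1) A.length with h | h
  · rw [show B.length + (1 + w) + 1 = B.length + 1 + (w + 1) by omega,
      getD_L_mid B A (by omega) (by omega)]
    congr 1
    omega
  · have hw : w + 1 = A.length := by omega
    rw [show B.length + (1 + w) + 1 = B.length + A.length + 1 by omega, getD_L_last,
      hw, getD_oob A (by omega)]

lemma dr_Q {A B : List Bool} (hA : IsDyck A) (hB : IsDyck B) :
    dr (true :: (A ++ false :: B)) = dr A + dr B + (if A = [] then 0 else 1) := by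
  classical
  have hcard : ∀ (P : List Bool), dr P = ∑ i ∈ Finset.range P.length,
      if (P.getD i false = true ∧ P.getD (i+1) false = true) then 1 else 0 := fun P => by
    rw [dr, Finset.card_filter]
  rw [hcard, hcard, hcard, length_Q, sum_shape_Q]
  have hz : (if ((true :: (A ++ false :: B)).getD (1 + A.length) false = true ∧
      (true :: (A ++ false :: B)).getD (1 + A.length + 1) false = true) then 1 else 0) = 0 := by
    rw [if_neg]
    rintro ⟨h1, -⟩
    rw [show 1 + A.length = A.length + 1 by omega, getD_Q_sep] at h1
    exact Bool.false_ne_true h1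
  have hmid : ∀ w ∈ Finset.range A.length,
      (if ((true :: (A ++ false :: B)).getD (1 + w) false = true ∧
          (true :: (A ++ false :: B)).getD (1 + w + 1) false = true) then 1 else 0) =
      (if (A.getD w false = true ∧ A.getD (w+1) false = true) then 1 else 0) := by
    intro w hw
    rw [Finset.mem_range] at hw
    rw [getD_Q_mid A B (by omega) (by omega), getD_Q_mid' A B hw, Nat.add_sub_cancel_left]
  have hhi : ∀ w ∈ Finset.range B.length,
      (if ((true :: (A ++ false :: B)).getD (A.length + 2 + w) false = true ∧
          (true :: (A ++ false :: B)).getD (A.length + 2 + w + 1) false = true) then 1 else 0) =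
      (if (B.getD w false = true ∧ B.getD (w+1) false = true) then 1 else 0) := by
    intro w hw
    rw [Finset.mem_range] at hw
    rw [getD_Q_hi A B (by omega), getD_Q_hi' A B hw,
      show A.length + 2 + w - (A.length + 2) = w from by omega]
  have hhead : (if ((true :: (A ++ false :: B)).getD 0 false = true ∧
      (true :: (A ++ false :: B)).getD (0+1) false = true) then 1 else 0) =
      (if A = [] then 0 else 1) := by
    rcases eq_or_ne A ([] : List Bool) with h | h
    · subst h
      have h2 : (true :: (([]:List Bool) ++ false :: B)).getD (0+1) false = false :=
        getD_Q_sep [] B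
      rw [if_pos rfl, if_neg]
      rintro ⟨-, hc⟩
      rw [h2] at hc
      exact Bool.false_ne_true hc
    · rw [if_neg h, if_pos]
      refine ⟨rfl, ?_⟩
      have hlen : 0 < A.length := List.length_pos_iff.2 h
      have h0 : (true :: (A ++ false :: B)).getD (0+1) false = A.getD 0 false :=
        getD_Q_mid A B le_rfl (by omega)
      rw [h0]
      exact hA.head_true h
  rw [Finset.sum_congr rfl hmid, Finset.sum_congr rfl hhi, hz, hhead]
  omega


lemma Umass_Q {A B : List Bool} (hA : IsDyck A) (hB : IsDyck B) :
    Umass (true :: (A ++ false :: B)) = Umass A + Umass B +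
      (if A = [] then 0 else (A.length - matchD A 0 - 1) / 2) := by
  classical
  have hcard : ∀ (P : List Bool), Umass P = ∑ i ∈ Finset.range P.length,
      if (P.getD i false = true ∧ P.getD (i+1) false = true) then
        (matchD P i - matchD P (i+1) - 1) / 2 else 0 := fun P => by
    rw [Umass, Finset.sum_filter]
  rw [hcard, hcard, hcard, length_Q, sum_shape_Q]
  set Q := true :: (A ++ false :: B) with hQdef
  have hz : (if (Q.getD (1 + A.length) false = true ∧
      Q.getD (1 + A.length + 1) false = true) then
        (matchD Q (1 + A.length) - matchD Q (1 + A.length + 1) - 1) / 2 else 0) = 0 := by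
    rw [if_neg]
    rintro ⟨h1, -⟩
    rw [hQdef, show 1 + A.length = A.length + 1 by omega, getD_Q_sep] at h1
    exact Bool.false_ne_true h1
  have hmid : ∀ w ∈ Finset.range A.length,
      (if (Q.getD (1 + w) false = true ∧ Q.getD (1 + w + 1) false = true) then
        (matchD Q (1 + w) - matchD Q (1 + w + 1) - 1) / 2 else 0) =
      (if (A.getD w false = true ∧ A.getD (w+1) false = true) then
        (matchD A w - matchD A (w+1) - 1) / 2 else 0) := by
    intro w hw
    rw [Finset.mem_range] at hw
    rw [hQdef, getD_Q_mid A B (by omega) (by omega), getD_Q_mid' A B hw,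
      Nat.add_sub_cancel_left]
    by_cases hc : A.getD w false = true ∧ A.getD (w+1) false = true
    · have hw1 : w + 1 < A.length := lt_of_getD_true hc.2
      rw [if_pos hc, if_pos hc, matchD_Q_A hA (by omega) hc.1,
        show 1 + w + 1 = 1 + (w+1) by omega, matchD_Q_A hA hw1 hc.2]
      omega
    · rw [if_neg hc, if_neg hc]
  have hhi : ∀ w ∈ Finset.range B.length,
      (if (Q.getD (A.length + 2 + w) false = true ∧
          Q.getD (A.length + 2 + w + 1) false = true) then
        (matchD Q (A.length + 2 + w) - matchD Q (A.length + 2 + w + 1) - 1) / 2 else 0) =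
      (if (B.getD w false = true ∧ B.getD (w+1) false = true) then
        (matchD B w - matchD B (w+1) - 1) / 2 else 0) := by
    intro w hw
    rw [Finset.mem_range] at hw
    rw [hQdef, getD_Q_hi A B (by omega), getD_Q_hi' A B hw,
      show A.length + 2 + w - (A.length + 2) = w from by omega]
    by_cases hc : B.getD w false = true ∧ B.getD (w+1) false = true
    · have hw1 : w + 1 < B.length := lt_of_getD_true hc.2
      rw [if_pos hc, if_pos hc, matchD_Q_B hA hB (by omega) hc.1,
        show A.length + 2 + w + 1 = A.length + 2 + (w+1) by omega,
        matchD_Q_B hA hB hw1 hc.2]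
      omega
    · rw [if_neg hc, if_neg hc]
  have hhead : (if (Q.getD 0 false = true ∧ Q.getD (0+1) false = true) then
      (matchD Q 0 - matchD Q (0+1) - 1) / 2 else 0) =
      (if A = [] then 0 else (A.length - matchD A 0 - 1) / 2) := by
    rcases eq_or_ne A ([] : List Bool) with h | h
    · subst h
      have h2 : Q.getD (0+1) false = false := getD_Q_sep [] B
      rw [if_pos rfl, if_neg]
      rintro ⟨-, hc⟩
      rw [h2] at hc
      exact Bool.false_ne_true hc
    · have hlen : 0 < A.length := List.length_pos_iff.2 h
      have h0 : Q.getD (0+1) false = A.getD 0 false := getD_Q_mid A B le_rfl (by omega)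
      have hu0 : A.getD 0 false = true := hA.head_true h
      rw [if_neg h, if_pos ⟨rfl, by rw [h0, hu0]⟩]
      have hm1 : matchD Q (0+1) = 1 + matchD A 0 := matchD_Q_A hA hlen hu0
      rw [hm1, hQdef, matchD_Q_zero hA]
      omega
  rw [Finset.sum_congr rfl hmid, Finset.sum_congr rfl hhi, hz, hhead]
  omega

lemma stun_L {B A : List Bool} (hB : IsDyck B) (hA : IsDyck A) :
    stun (B ++ (true :: (A ++ [false]))) = stun B + stun A +
      (if B = [] then 0
       else (B.length - tunnelStart (B ++ (true :: (A ++ [false]))) (B.length - 1)) / 2) := by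
  classical
  have hcard : ∀ (P : List Bool), stun P = ∑ v ∈ Finset.range P.length,
      if (P.getD v false = false ∧ P.getD (v+1) false = true) then
        (v + 1 - tunnelStart P v) / 2 else 0 := fun P => by
    rw [stun, Finset.sum_filter]
  rw [hcard, hcard, hcard, length_L, sum_shape_L]
  set L := B ++ (true :: (A ++ [false])) with hLdef
  -- middle zero term at the separating up-step
  have hz0 : (if (L.getD (B.length + 0) false = false ∧
      L.getD (B.length + 0 + 1) false = true) then
        (B.length + 0 + 1 - tunnelStart L (B.length + 0)) / 2 else 0) = 0 := by
    rw [if_neg]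
    rintro ⟨h1, -⟩
    rw [hLdef, show B.length + 0 = B.length by omega, getD_L_sep] at h1
    exact absurd h1 (by simp)
  -- final zero term at the closing down-step
  have hz1 : (if (L.getD (B.length + (1 + A.length)) false = false ∧
      L.getD (B.length + (1 + A.length) + 1) false = true) then
        (B.length + (1 + A.length) + 1 - tunnelStart L (B.length + (1 + A.length))) / 2
      else 0) = 0 := by
    rw [if_neg]
    rintro ⟨-, h2⟩
    have hoob : L.length ≤ B.length + (1 + A.length) + 1 := by
      rw [hLdef, length_L]; omega
    rw [getD_oob L hoob] at h2
    exact Bool.false_ne_true h2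
  -- middle chunk matches stun A
  have hmid : ∀ w ∈ Finset.range A.length,
      (if (L.getD (B.length + (1 + w)) false = false ∧
          L.getD (B.length + (1 + w) + 1) false = true) then
        (B.length + (1 + w) + 1 - tunnelStart L (B.length + (1 + w))) / 2 else 0) =
      (if (A.getD w false = false ∧ A.getD (w+1) false = true) then
        (w + 1 - tunnelStart A w) / 2 else 0) := by
    intro w hw
    rw [Finset.mem_range] at hw
    have e1 : L.getD (B.length + (1 + w)) false = A.getD w false := by
      rw [hLdef, show B.length + (1 + w) = B.length + 1 + w by omega,
        getD_L_mid B A (by omega) (by omega),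
        show B.length + 1 + w - B.length - 1 = w from by omega]
    have e2 : L.getD (B.length + (1 + w) + 1) false = A.getD (w + 1) false := by
      rw [hLdef]; exact getD_L_mid' B A hw
    rw [e1, e2]
    by_cases hc : A.getD w false = false ∧ A.getD (w+1) false = true
    · have hw1 : w + 1 < A.length := lt_of_getD_true hc.2
      have hts := tunnelStart_spec hA (j := w) (by omega) hc.1
      rw [if_pos hc, if_pos hc, show B.length + (1 + w) = B.length + 1 + w by omega,
        hLdef, tunnelStart_L_mid hB hA hw1 hc.1]
      have := hts.1
      omega
    · rw [if_neg hc, if_neg hc]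
  -- first chunk: stun B plus (when B ≠ []) the boundary valley
  rcases eq_or_ne B ([] : List Bool) with hBe | hBe
  · subst hBe
    rw [Finset.sum_congr rfl hmid, hz0, hz1, if_pos rfl]
    simp [stun, tunnelStart]
  · have hBl : 0 < B.length := List.length_pos_iff.2 hBe
    have hlo : ∀ v ∈ Finset.range (B.length - 1),
        (if (L.getD v false = false ∧ L.getD (v+1) false = true) then
          (v + 1 - tunnelStart L v) / 2 else 0) =
        (if (B.getD v false = false ∧ B.getD (v+1) false = true) then
          (v + 1 - tunnelStart B v) / 2 else 0) := by
      intro v hv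
      rw [Finset.mem_range] at hv
      have e1 : L.getD v false = B.getD v false := by
        rw [hLdef]; exact getD_L_lo B A (by omega)
      have e2 : L.getD (v+1) false = B.getD (v+1) false := by
        rw [hLdef]; exact getD_L_lo B A (by omega)
      rw [e1, e2, hLdef, tunnelStart_L_lo (by omega)]
    have hlastB : (if (B.getD (B.length - 1) false = false ∧
        B.getD (B.length - 1 + 1) false = true) then
          (B.length - 1 + 1 - tunnelStart B (B.length - 1)) / 2 else 0) = 0 := by
      rw [if_neg]
      rintro ⟨-, h2⟩
      rw [getD_oob B (by omega)] at h2
      exact Bool.false_ne_true h2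
    have hlastL : (if (L.getD (B.length - 1) false = false ∧
        L.getD (B.length - 1 + 1) false = true) then
          (B.length - 1 + 1 - tunnelStart L (B.length - 1)) / 2 else 0) =
        (B.length - tunnelStart L (B.length - 1)) / 2 := by
      have e1 : L.getD (B.length - 1) false = B.getD (B.length - 1) false := by
        rw [hLdef]; exact getD_L_lo B A (by omega)
      have e2 : L.getD (B.length - 1 + 1) false = true := by
        rw [hLdef, show B.length - 1 + 1 = B.length by omega, getD_L_sep]
      rw [e1, e2, if_pos ⟨hB.last_false hBe, rfl⟩, show B.length - 1 + 1 = B.length by omega]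
    have hsplit : ∀ (f : ℕ → ℕ), ∑ v ∈ Finset.range B.length, f v =
        (∑ v ∈ Finset.range (B.length - 1), f v) + f (B.length - 1) := by
      intro f
      rw [show B.length = (B.length - 1) + 1 by omega, Finset.sum_range_succ]
      congr 1 <;> rw [show B.length - 1 + 1 - 1 = B.length - 1 by omega]
    rw [Finset.sum_congr rfl hmid, hz0, hz1, if_neg hBe, hsplit, hsplit,
      Finset.sum_congr rfl hlo, hlastB, hlastL]
    omega


lemma fF_ne_nil (a b : TT) : fF (TT.node a b) ≠ [] := by simp [fF]

lemma fL_ne_nil (a b : TT) : fL (TT.node a b) ≠ [] := by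
  intro h
  have := congrArg List.length h
  rw [length_fL] at this
  simp [TT.size] at this

lemma M_eq_g (t : TT) : Umass (fF t) + dr (fF t) = TT.g t := by
  induction t with
  | leaf =>
    simp [fF, TT.g, Umass, dr]
  | node a b iha ihb =>
    have hQ : fF (TT.node a b) = true :: (fF a ++ false :: fF b) := rfl
    rw [hQ, Umass_Q (isDyck_fF a) (isDyck_fF b), dr_Q (isDyck_fF a) (isDyck_fF b)]
    have hextra : (if fF a = [] then 0 else ((fF a).length - matchD (fF a) 0 - 1) / 2) +
        (if fF a = [] then 0 else 1) = TT.extra a := by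
      cases a with
      | leaf => simp [fF, TT.extra]
      | node a1 a2 =>
        rw [if_neg (fF_ne_nil a1 a2), if_neg (fF_ne_nil a1 a2)]
        have hm : matchD (fF (TT.node a1 a2)) 0 = (fF a1).length + 1 :=
          matchD_Q_zero (isDyck_fF a1)
        rw [hm, length_fF, length_fF, TT.extra]
        have : (TT.node a1 a2).size = a1.size + a2.size + 1 := rfl
        rw [this]
        omega
    rw [TT.g]
    omega

lemma S_eq_g (t : TT) : stun (fL t) = TT.g t := by
  induction t with
  | leaf => simp [fL, TT.g, stun, tunnelStart]
  | node a b iha ihb =>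
    have hL : fL (TT.node a b) = fL a ++ (true :: (fL b ++ [false])) := rfl
    rw [hL, stun_L (isDyck_fL a) (isDyck_fL b)]
    have hextra : (if fL a = [] then 0
        else ((fL a).length -
          tunnelStart (fL a ++ (true :: (fL b ++ [false]))) ((fL a).length - 1)) / 2) =
        TT.extra a := by
      cases a with
      | leaf => simp [fL, TT.extra]
      | node a1 a2 =>
        rw [if_neg (fL_ne_nil a1 a2)]
        have hts : tunnelStart (fL (TT.node a1 a2) ++ (true :: (fL b ++ [false])))
            ((fL (TT.node a1 a2)).length - 1) = (fL a1).length := by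
          have := tunnelStart_L_sep (isDyck_fL a1) (isDyck_fL a2) (isDyck_fL b)
          exact this
        rw [hts, length_fL, length_fL, TT.extra]
        have : (TT.node a1 a2).size = a1.size + a2.size + 1 := rfl
        rw [this]
        omega
    rw [TT.g, hextra, iha, ihb]

lemma stat_transfer (t : TT) : stun (fL t) = Umass (fF t) + dr (fF t) := by
  rw [S_eq_g, M_eq_g]


lemma Q_unique {A1 B1 A2 B2 : List Bool} (hA1 : IsDyck A1) (hA2 : IsDyck A2)
    (h : true :: (A1 ++ false :: B1) = true :: (A2 ++ false :: B2)) :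
    A1 = A2 ∧ B1 = B2 := by
  have key : ∀ (A1 B1 A2 B2 : List Bool), IsDyck A1 → IsDyck A2 →
      true :: (A1 ++ false :: B1) = true :: (A2 ++ false :: B2) →
      ¬ (A1.length < A2.length) := by
    intro A1 B1 A2 B2 hA1 hA2 h hlt
    have h1 : Hh (true :: (A1 ++ false :: B1)) (A1.length + 2) = 0 := by
      rw [Hh_Q_ge hA1 (le_refl _), Nat.sub_self, Hh_zero]
    have h2 : Hh (true :: (A2 ++ false :: B2)) (A1.length + 2) =
        1 + Hh A2 (A1.length + 2 - 1) := Hh_Q_le (by omega) (by omega)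
    rw [h, h2] at h1
    have := hA2.hh_nonneg (A1.length + 2 - 1)
    omega
  have hlen : A1.length = A2.length := by
    rcases Nat.lt_trichotomy A1.length A2.length with hl | hl | hl
    · exact absurd hl (key _ _ _ _ hA1 hA2 h)
    · exact hl
    · exact absurd hl (key _ _ _ _ hA2 hA1 h.symm)
  have htail : A1 ++ false :: B1 = A2 ++ false :: B2 := by
    injection h
  obtain ⟨e1, e2⟩ := List.append_inj htail hlen
  exact ⟨e1, by injection e2⟩

lemma L_unique {B1 A1 B2 A2 : List Bool} (hB1 : IsDyck B1) (hA1 : IsDyck A1)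
    (hB2 : IsDyck B2) (hA2 : IsDyck A2)
    (h : B1 ++ (true :: (A1 ++ [false])) = B2 ++ (true :: (A2 ++ [false]))) :
    B1 = B2 ∧ A1 = A2 := by
  have hlentot : B1.length + (A1.length + 2) = B2.length + (A2.length + 2) := by
    have := congrArg List.length h
    rwa [length_L, length_L] at this
  have key : ∀ (B1 A1 B2 A2 : List Bool), IsDyck B1 → IsDyck B2 → IsDyck A1 →
      B1 ++ (true :: (A1 ++ [false])) = B2 ++ (true :: (A2 ++ [false])) →
      B1.length + A1.length = B2.length + A2.length →
      ¬ (B1.length < B2.length) := by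
    intro B1 A1 B2 A2 hB1 hB2 hA1' h hlen hlt
    have h1 : Hh (B2 ++ (true :: (A2 ++ [false]))) B2.length = 0 := by
      rw [Hh_L_le (le_refl _), hB2.hh_len]
    have h2 : Hh (B1 ++ (true :: (A1 ++ [false]))) B2.length =
        1 + Hh A1 (B2.length - B1.length - 1) :=
      Hh_L_mid hB1 (by omega) (by omega)
    rw [h, h1] at h2
    have hnn : 0 ≤ Hh A1 (B2.length - B1.length - 1) := hA1'.hh_nonneg _
    omega
  have hlen : B1.length = B2.length := by
    rcases Nat.lt_trichotomy B1.length B2.length with hl | hl | hl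
    · exact absurd hl (key _ _ _ _ hB1 hB2 hA1 h (by omega))
    · exact hl
    · exact absurd hl (key _ _ _ _ hB2 hB1 hA2 h.symm (by omega))
  obtain ⟨e1, e2⟩ := List.append_inj h hlen
  refine ⟨e1, ?_⟩
  have e3 : A1 ++ [false] = A2 ++ [false] := by injection e2
  exact (List.append_inj' e3 rfl).1

lemma fF_inj : Function.Injective fF := by
  intro t1
  induction t1 with
  | leaf =>
    intro t2 h
    cases t2 with
    | leaf => rfl
    | node c d => exact absurd h.symm (fF_ne_nil c d)
  | node a b iha ihb =>
    intro t2 h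
    cases t2 with
    | leaf => exact absurd h (fF_ne_nil a b)
    | node c d =>
      obtain ⟨e1, e2⟩ := Q_unique (isDyck_fF a) (isDyck_fF c) h
      rw [iha e1, ihb e2]

lemma fL_inj : Function.Injective fL := by
  intro t1
  induction t1 with
  | leaf =>
    intro t2 h
    cases t2 with
    | leaf => rfl
    | node c d => exact absurd h.symm (fL_ne_nil c d)
  | node a b iha ihb =>
    intro t2 h
    cases t2 with
    | leaf => exact absurd h (fL_ne_nil a b)
    | node c d =>
      obtain ⟨e1, e2⟩ := L_unique (isDyck_fL a) (isDyck_fL b) (isDyck_fL c) (isDyck_fL d) h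
      rw [iha e1, ihb e2]


lemma exists_decomp_Q {P : List Bool} (hP : IsDyck P) (hne : P ≠ []) :
    ∃ A B, IsDyck A ∧ IsDyck B ∧ P = true :: (A ++ false :: B) := by
  have hlen : 0 < P.length := List.length_pos_iff.2 hne
  have hhead : P.getD 0 false = true := hP.head_true hne
  obtain ⟨hm1, hm2, hm3, hm4⟩ := matchD_spec hP hlen hhead
  set m := matchD P 0 with hm
  rw [Hh_zero] at hm3
  -- heights are positive strictly inside the first irreducible factor
  have hpos : ∀ i, 1 ≤ i → i ≤ m → 1 ≤ Hh P i := by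
    intro i h1 h2
    rcases Nat.eq_or_lt_of_le h1 with h | h
    · subst h
      have hst := Hh_step P 0 hlen
      rw [hhead, if_pos rfl, Hh_zero] at hst
      simp at hst
      omega
    · have hne0 : Hh P i ≠ 0 := by
        have := hm4 (i - 1) (by omega) (by omega)
        rwa [show i - 1 + 1 = i by omega, Hh_zero] at this
      have := hP.hh_nonneg i
      omega
  -- structural decomposition
  obtain ⟨p0, rest, rfl⟩ : ∃ p0 rest, P = p0 :: rest := by
    cases P with
    | nil => exact absurd rfl hne
    | cons x xs => exact ⟨x, xs, rfl⟩
  have hp0 : p0 = true := hhead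
  subst hp0
  have hrest : m - 1 < rest.length := by
    simp only [List.length_cons] at hm2; omega
  set A : List Bool := rest.take (m - 1) with hA
  have hAlen : A.length = m - 1 := by rw [hA, List.length_take]; omega
  obtain ⟨c, B, hC⟩ : ∃ c B, rest.drop (m - 1) = c :: B := by
    cases hd : rest.drop (m - 1) with
    | nil =>
      have := congrArg List.length hd
      rw [List.length_drop] at this
      simp at this
      omega
    | cons c B => exact ⟨c, B, rfl⟩
  have hPeq : (true :: rest) = true :: (A ++ c :: B) := by
    rw [hA, ← hC, List.take_append_drop]
  have hc : c = false := by
    by_contra hcne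
    have hct : c = true := by
      cases c
      · exact absurd rfl hcne
      · rfl
    have hgm : (true :: rest).getD m false = c := by
      rw [hPeq, show m = (m - 1) + 1 by omega, List.getD_cons_succ,
        List.getD_append_right _ _ _ _ (by omega), hAlen, Nat.sub_self]
      rfl
    have hstep := Hh_step (true :: rest) m (by omega)
    rw [hgm, hct, if_pos rfl] at hstep
    have := hpos m (by omega) le_rfl
    omega
  subst hc
  rw [hPeq]
  -- heights of P at m : exactly 1
  have hHm : Hh (true :: rest) m = 1 := by
    have hstep := Hh_step (true :: rest) m (by omega)
    have hgm : (true :: rest).getD m false = false := by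
      rw [hPeq, show m = (m - 1) + 1 by omega, List.getD_cons_succ,
        List.getD_append_right _ _ _ _ (by omega), hAlen, Nat.sub_self]
      rfl
    rw [hgm] at hstep
    have := hpos m (by omega) le_rfl
    simp only [if_neg (Bool.false_ne_true)] at hstep
    omega
  have hA_dyck : IsDyck A := by
    rw [isDyck_iff]
    have hkey : ∀ k, k ≤ A.length → Hh A k = Hh (true :: (A ++ false :: B)) (k + 1) - 1 := by
      intro k hk
      rw [Hh_Q_le (by omega) (by omega), Nat.add_sub_cancel]
      ring
    have hlast : Hh A A.length = 0 := by
      rw [hkey _ le_rfl, ← hPeq, show A.length + 1 = m by omega, hHm]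
      ring
    refine ⟨fun k => ?_, hlast⟩
    rcases le_or_gt k A.length with hk | hk
    · rw [hkey k hk, ← hPeq]
      have := hpos (k + 1) (by omega) (by omega)
      omega
    · rw [Hh_of_ge (by omega), hlast]
  have hB_dyck : IsDyck B := by
    rw [isDyck_iff]
    have hkey : ∀ j, Hh B j = Hh (true :: (A ++ false :: B)) (A.length + 2 + j) := by
      intro j
      rw [Hh_Q_ge hA_dyck (by omega), Nat.add_sub_cancel_left]
    have hlenP : (true :: rest).length = A.length + 2 + B.length := by
      rw [hPeq, length_Q]
    constructor
    · intro k
      rw [hkey k, ← hPeq]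
      exact hP.hh_nonneg _
    · rw [hkey, ← hPeq]
      exact hP.hh_eq_zero (le_of_eq hlenP)
  exact ⟨A, B, hA_dyck, hB_dyck, rfl⟩


lemma exists_decomp_L {P : List Bool} (hP : IsDyck P) (hne : P ≠ []) :
    ∃ B A, IsDyck B ∧ IsDyck A ∧ P = B ++ (true :: (A ++ [false])) := by
  have hlen : 0 < P.length := List.length_pos_iff.2 hne
  have hlen2 : 2 ≤ P.length := by
    by_contra hc
    have h1 : P.length = 1 := by omega
    have hst := Hh_step P 0 hlen
    rw [Hh_zero] at hst
    have := hP.hh_len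
    rw [h1] at this
    simp at hst
    split_ifs at hst <;> omega
  have hlast : P.getD (P.length - 1) false = false := hP.last_false hne
  obtain ⟨hm1, hm2, hm3⟩ := tunnelStart_spec hP (by omega) hlast
  set m := tunnelStart P (P.length - 1) with hm
  rw [show P.length - 1 + 1 = P.length by omega, hP.hh_len] at hm2 hm3
  have hpen : Hh P (P.length - 1) = 1 := by
    have hst := Hh_step P (P.length - 1) (by omega)
    rw [hlast, show P.length - 1 + 1 = P.length by omega, hP.hh_len,
      if_neg Bool.false_ne_true] at hst
    omega
  have hmlt : m < P.length - 1 := by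
    rcases Nat.eq_or_lt_of_le hm1 with h | h
    · rw [h, hpen] at hm2; omega
    · exact h
  have hpos : ∀ i, m < i → i ≤ P.length - 1 → 1 ≤ Hh P i := by
    intro i h1 h2
    have := hm3 i h1 h2
    have := hP.hh_nonneg i
    omega
  have hgm : P.getD m false = true := by
    by_contra hc
    have hcf : P.getD m false = false := by
      cases hx : P.getD m false
      · rfl
      · exact absurd hx hc
    have hst := Hh_step P m (by omega)
    rw [hcf, if_neg Bool.false_ne_true, hm2] at hst
    have := hpos (m + 1) (by omega) (by omega)
    omega
  -- structural split
  set B : List Bool := P.take m with hB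
  have hBlen : B.length = m := by rw [hB, List.length_take]; omega
  obtain ⟨c, D, hD⟩ : ∃ c D, P.drop m = c :: D := by
    cases hd : P.drop m with
    | nil =>
      have := congrArg List.length hd
      rw [List.length_drop] at this
      simp at this
      omega
    | cons c D => exact ⟨c, D, rfl⟩
  have hPsplit : P = B ++ c :: D := by rw [hB, ← hD, List.take_append_drop]
  have hc : c = true := by
    have : P.getD m false = c := by
      rw [hPsplit, List.getD_append_right _ _ _ _ (by omega), hBlen, Nat.sub_self]
      rfl
    rw [this] at hgm
    exact hgm
  subst hc
  have hDlen : D.length = P.length - m - 1 := by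
    have := congrArg List.length hPsplit
    simp only [List.length_append, List.length_cons] at this
    omega
  have hDne : D ≠ [] := by
    intro h
    rw [h] at hDlen
    simp at hDlen
    omega
  set A : List Bool := D.dropLast with hA
  have h2 : D.getD (D.length - 1) false = false := by
    have e1 : P.getD (P.length - 1) false = D.getD (D.length - 1) false := by
      rw [show P.length - 1 = m + D.length by omega, hPsplit,
        List.getD_append_right _ _ _ _ (by omega),
        show m + D.length - B.length = (D.length - 1) + 1 by omega,
        List.getD_cons_succ]
    rw [← e1]
    exact hlast
  have hDlast : D = A ++ [false] := by
    have h1 : D = D.dropLast ++ [D.getLast hDne] := (List.dropLast_append_getLast hDne).symm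
    have h3 : D.getLast hDne = false := by
      rw [List.getLast_eq_getElem, ← List.getD_eq_getElem D false (by omega)]
      exact h2
    rw [hA, ← h3]
    exact h1
  have hPfinal : P = B ++ (true :: (A ++ [false])) := by
    rw [hPsplit, hDlast]
  have hAlen : A.length = P.length - m - 2 := by
    rw [hA, List.length_dropLast]
    omega
  have hB_dyck : IsDyck B := by
    rw [isDyck_iff]
    have hkey : ∀ k, Hh P k = Hh B k + Hh (true :: D) (k - B.length) := by
      intro k
      rw [hPsplit, Hh_append]
    constructor
    · intro k
      rcases le_or_gt k m with hk | hk
      · have := hkey k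
        rw [show k - B.length = 0 by omega, Hh_zero, add_zero] at this
        rw [← this]
        exact hP.hh_nonneg k
      · rw [Hh_of_ge (by omega)]
        have := hkey m
        rw [show m - B.length = 0 by omega, Hh_zero, add_zero, hm2] at this
        rw [hBlen, ← this]
    · have := hkey m
      rw [show m - B.length = 0 by omega, Hh_zero, add_zero, hm2] at this
      rw [hBlen, ← this]
  have hA_dyck : IsDyck A := by
    rw [isDyck_iff]
    have hkey : ∀ j, j ≤ A.length → Hh A j = Hh P (m + 1 + j) - 1 := by
      intro j hj
      have := Hh_L_mid (B := B) (A := A) hB_dyck (k := m + 1 + j) (by omega) (by omega)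
      rw [← hPfinal, show m + 1 + j - B.length - 1 = j by omega] at this
      omega
    have hlenrel : m + 1 + A.length = P.length - 1 := by omega
    have hlastA : Hh A A.length = 0 := by
      rw [hkey _ le_rfl, hlenrel, hpen]
      ring
    refine ⟨fun k => ?_, hlastA⟩
    rcases le_or_gt k A.length with hk | hk
    · rw [hkey k hk]
      have := hpos (m + 1 + k) (by omega) (by omega)
      omega
    · rw [Hh_of_ge (by omega), hlastA]
  exact ⟨B, A, hB_dyck, hA_dyck, hPfinal⟩


lemma fF_surj : ∀ (n : ℕ) (P : List Bool), P.length = n → IsDyck P → ∃ t, fF t = P := by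
  intro n
  induction n using Nat.strong_induction_on with
  | _ n ih =>
    intro P hn hP
    rcases eq_or_ne P ([] : List Bool) with h | h
    · exact ⟨TT.leaf, by rw [fF, h]⟩
    · obtain ⟨A, B, hA, hB, hPeq⟩ := exists_decomp_Q hP h
      have hlen : P.length = A.length + 2 + B.length := by rw [hPeq, length_Q]
      obtain ⟨tA, htA⟩ := ih A.length (by omega) A rfl hA
      obtain ⟨tB, htB⟩ := ih B.length (by omega) B rfl hB
      exact ⟨TT.node tA tB, by rw [show fF (TT.node tA tB) =
        true :: (fF tA ++ false :: fF tB) from rfl, htA, htB, hPeq]⟩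

lemma fL_surj : ∀ (n : ℕ) (P : List Bool), P.length = n → IsDyck P → ∃ t, fL t = P := by
  intro n
  induction n using Nat.strong_induction_on with
  | _ n ih =>
    intro P hn hP
    rcases eq_or_ne P ([] : List Bool) with h | h
    · exact ⟨TT.leaf, by rw [fL, h]⟩
    · obtain ⟨B, A, hB, hA, hPeq⟩ := exists_decomp_L hP h
      have hlen : P.length = B.length + (A.length + 2) := by rw [hPeq, length_L]
      obtain ⟨tB, htB⟩ := ih B.length (by omega) B rfl hB
      obtain ⟨tA, htA⟩ := ih A.length (by omega) A rfl hA
      exact ⟨TT.node tB tA, by rw [show fL (TT.node tB tA) =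
        fL tB ++ (true :: (fL tA ++ [false])) from rfl, htA, htB, hPeq]⟩

noncomputable def eqF (n : ℕ) : {t : TT // t.size = n} ≃ {P : List Bool // DyckN n P} :=
  Equiv.ofBijective
    (fun t => ⟨fF t.1, isDyck_fF t.1, by rw [length_fF, t.2]⟩)
    (by
      constructor
      · intro t1 t2 h
        exact Subtype.ext (fF_inj (congrArg Subtype.val h))
      · rintro ⟨P, hP, hl⟩
        obtain ⟨t, ht⟩ := fF_surj P.length P rfl hP
        have hsz : t.size = n := by
          have := congrArg List.length ht
          rw [length_fF, hl] at this
          omega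
        exact ⟨⟨t, hsz⟩, Subtype.ext ht⟩)

noncomputable def eqL (n : ℕ) : {t : TT // t.size = n} ≃ {P : List Bool // DyckN n P} :=
  Equiv.ofBijective
    (fun t => ⟨fL t.1, isDyck_fL t.1, by rw [length_fL, t.2]⟩)
    (by
      constructor
      · intro t1 t2 h
        exact Subtype.ext (fL_inj (congrArg Subtype.val h))
      · rintro ⟨P, hP, hl⟩
        obtain ⟨t, ht⟩ := fL_surj P.length P rfl hP
        have hsz : t.size = n := by
          have := congrArg List.length ht
          rw [length_fL, hl] at this
          omega
        exact ⟨⟨t, hsz⟩, Subtype.ext ht⟩)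

/-- there is a bijection `Φ` on Dyck paths of semilength `n` with
`stun(P) = Umass(Φ P) + dr(Φ P)`; hence `stun` and `Umass + dr` are equidistributed
over `Dyck_n`. -/
theorem stmt11 (n : ℕ) :
    (∃ Φ : {P : List Bool // DyckN n P} ≃ {P : List Bool // DyckN n P},
        ∀ P : {P : List Bool // DyckN n P}, stun P.1 = Umass (Φ P).1 + dr (Φ P).1) ∧
    (∀ k : ℕ,
      Set.ncard {P : List Bool | DyckN n P ∧ stun P = k} =
      Set.ncard {P : List Bool | DyckN n P ∧ Umass P + dr P = k}) := by
  classical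
  set Φ : {P : List Bool // DyckN n P} ≃ {P : List Bool // DyckN n P} :=
    (eqL n).symm.trans (eqF n) with hΦ
  have hprop : ∀ P : {P : List Bool // DyckN n P}, stun P.1 = Umass (Φ P).1 + dr (Φ P).1 := by
    intro P
    set t := (eqL n).symm P with ht
    have h1 : P.1 = fL t.1 := by
      have := congrArg Subtype.val ((eqL n).apply_symm_apply P)
      rw [← ht] at this
      exact this.symm
    have h2 : (Φ P).1 = fF t.1 := rfl
    rw [h1, h2]
    exact stat_transfer t.1
  refine ⟨⟨Φ, hprop⟩, fun k => ?_⟩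
  set F : List Bool → List Bool := fun P => if h : DyckN n P then (Φ ⟨P, h⟩).1 else [] with hF
  have hinj : Set.InjOn F {P : List Bool | DyckN n P ∧ stun P = k} := by
    rintro P1 ⟨h1, -⟩ P2 ⟨h2, -⟩ he
    rw [hF] at he
    simp only [dif_pos h1, dif_pos h2] at he
    have := Φ.injective (Subtype.ext he)
    exact congrArg Subtype.val this
  have himg : F '' {P : List Bool | DyckN n P ∧ stun P = k} =
      {P : List Bool | DyckN n P ∧ Umass P + dr P = k} := by
    ext Q
    constructor
    · rintro ⟨P, ⟨hP, hs⟩, rfl⟩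
      simp only [hF, dif_pos hP]
      exact ⟨(Φ ⟨P, hP⟩).2, by rw [← hprop ⟨P, hP⟩]; exact hs⟩
    · rintro ⟨hQ, hu⟩
      refine ⟨(Φ.symm ⟨Q, hQ⟩).1, ⟨(Φ.symm ⟨Q, hQ⟩).2, ?_⟩, ?_⟩
      · rw [hprop (Φ.symm ⟨Q, hQ⟩), Φ.apply_symm_apply]
        exact hu
      · simp only [hF, dif_pos (Φ.symm ⟨Q, hQ⟩).2]
        have : (⟨(Φ.symm ⟨Q, hQ⟩).1, (Φ.symm ⟨Q, hQ⟩).2⟩ : {P : List Bool // DyckN n P}) =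
            Φ.symm ⟨Q, hQ⟩ := rfl
        rw [this, Φ.apply_symm_apply]
  rw [← himg, Set.ncard_image_of_injOn hinj]


end MahonianStats
end

section
/- For every 321-avoiding permutation π of {1,...,n}, den(π) = Σ_{i : π(i) > i} i, i.e. the Denert statistic on 321-avoiding permutations reduces to the sum of positions of excedances. -/
namespace MahonianStats

open Finset

/-- Inversions of a list of values (in position order). -/
def invL (L : List ℕ) : ℕ :=
  ((Finset.range L.length ×ˢ Finset.range L.length).filter fun p =>
    p.1 < p.2 ∧ L.getD p.2 0 < L.getD p.1 0).card

/-- The subsequence of excedance values `σ(i)` with `σ(i) > i` (1-indexed). -/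
def excL (n : ℕ) (f : ℕ → ℕ) : List ℕ := ((List.range n).filter (fun i => i + 1 < f i)).map f

/-- The subsequence of non-excedance values `σ(i)` with `σ(i) ≤ i` (1-indexed). -/
def nexcL (n : ℕ) (f : ℕ → ℕ) : List ℕ := ((List.range n).filter (fun i => f i ≤ i + 1)).map f

/-- Denert's statistic. -/
def den (n : ℕ) (f : ℕ → ℕ) : ℕ :=
  invL (excL n f) + invL (nexcL n f) +
    ∑ i ∈ (Finset.range n).filter (fun i => i + 1 < f i), (i + 1)

/-! A 321-avoiding permutation is the union of two increasing subsequences: its excedance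
values and its weak non-excedance values. Indeed, if `σ b > b` then by counting some later
position carries a smaller value, and if `σ a ≤ a` is followed by a smaller value then by counting
some earlier position carries a larger value; either way an inversion inside one of the two
subsequences would extend to an occurrence of 321. So both inversion counts in `den` vanish. -/

lemma invL_eq_zero_of_pairwise_le {L : List ℕ} (hL : L.Pairwise (· ≤ ·)) : invL L = 0 := by
  rw [invL, card_eq_zero, filter_eq_empty_iff]
  rintro ⟨p, q⟩ hpq ⟨hlt, hinv⟩
  simp only [mem_product, mem_range] at hpq
  rw [List.getD_eq_getElem _ _ hpq.1, List.getD_eq_getElem _ _ hpq.2] at hinv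
  exact (List.pairwise_iff_getElem.1 hL p q hpq.1 hpq.2 hlt).not_gt hinv

lemma pairwise_le_map_filter_range {n : ℕ} {p : ℕ → Prop} [DecidablePred p] {f : ℕ → ℕ}
    (hf : ∀ a b, a < b → b < n → p a → p b → f a ≤ f b) :
    (((List.range n).filter fun i => p i).map f).Pairwise (· ≤ ·) := by
  rw [List.pairwise_map]
  refine (List.pairwise_lt_range.filter _).imp_of_mem fun {a b} ha hb hab => ?_
  simp only [List.mem_filter, List.mem_range, decide_eq_true_eq] at ha hb
  exact hf a b hab hb.1 ha.2 hb.2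

section Pigeonhole

variable {n : ℕ} (σ : Equiv.Perm (Fin n))

/-- Only `j` positions precede `j`, too few to carry all `σ j > j` smaller values. -/
lemma exists_lt_apply_lt_of_lt_apply {j : Fin n} (hj : j < σ j) : ∃ k, j < k ∧ σ k < σ j := by
  by_contra! hcon
  have hsub : (Iio (σ j)).map σ.symm.toEmbedding ⊆ Iio j := by
    intro k hk
    simp only [mem_map_equiv, Equiv.symm_symm, mem_Iio] at hk ⊢
    by_contra! hjk
    rcases hjk.lt_or_eq with hjk | rfl
    · exact (hk.trans_le (hcon k hjk)).false
    · exact hk.false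
  have := card_le_card hsub
  simp only [card_map, Fin.card_Iio] at this
  exact absurd hj (not_lt.2 this)

/-- The `n - 1 - σ i ≥ n - 1 - i` values above `σ i` cannot all sit after `i` when one of
those later positions, `j`, carries a smaller value. -/
lemma exists_lt_apply_gt_of_apply_le {i j : Fin n} (hi : σ i ≤ i) (hij : i < j)
    (hj : σ j < σ i) : ∃ k, k < i ∧ σ i < σ k := by
  by_contra! hcon
  have hsub : (Ioi (σ i)).map σ.symm.toEmbedding ⊆ (Ioi i).erase j := by
    intro k hk
    simp only [mem_map_equiv, Equiv.symm_symm, mem_Ioi, mem_erase] at hk ⊢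
    refine ⟨fun hkj => (hk.trans (hkj ▸ hj)).false, ?_⟩
    by_contra! hki
    rcases hki.lt_or_eq with hki | rfl
    · exact (hk.trans_le (hcon k hki)).false
    · exact hk.false
  have := card_le_card hsub
  rw [card_map, card_erase_of_mem (mem_Ioi.2 hij), Fin.card_Ioi, Fin.card_Ioi] at this
  have : (i : ℕ) < j := hij
  have : (σ i : ℕ) ≤ i := hi
  omega

end Pigeonhole

lemma pf_of_lt {n : ℕ} (σ : Equiv.Perm (Fin n)) {i : ℕ} (hi : i < n) :
    pf σ i = σ ⟨i, hi⟩ + 1 :=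
  dif_pos hi

section Av321

variable {n : ℕ} {σ : Equiv.Perm (Fin n)}

lemma Av321.pf_le_of_excedance (h : Av321 n (pf σ)) {a b : ℕ} (hab : a < b) (hb : b < n)
    (hexc : b + 1 < pf σ b) : pf σ a ≤ pf σ b := by
  by_contra! hinv
  rw [pf_of_lt σ hb] at hexc hinv
  obtain ⟨k, hbk, hk⟩ :=
    exists_lt_apply_lt_of_lt_apply σ (j := ⟨b, hb⟩) (Fin.lt_def.2 (by simpa using hexc))
  refine h ⟨a, b, k, hab, hbk, k.isLt, ?_, ?_⟩
  · rw [pf_of_lt σ k.isLt, pf_of_lt σ hb]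
    exact Nat.succ_lt_succ hk
  · rwa [pf_of_lt σ hb]

lemma Av321.pf_le_of_weak_nonexcedance (h : Av321 n (pf σ)) {a b : ℕ} (hab : a < b)
    (hb : b < n) (hnexc : pf σ a ≤ a + 1) : pf σ a ≤ pf σ b := by
  by_contra! hinv
  have ha : a < n := hab.trans hb
  rw [pf_of_lt σ ha, pf_of_lt σ hb] at hinv
  rw [pf_of_lt σ ha] at hnexc
  obtain ⟨k, hka, hk⟩ := exists_lt_apply_gt_of_apply_le σ (i := ⟨a, ha⟩) (j := ⟨b, hb⟩)
    (Fin.le_def.2 (by simpa using hnexc)) (Fin.lt_def.2 hab)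
    (Fin.lt_def.2 (by simpa using hinv))
  refine h ⟨k, a, b, hka, hab, hb, ?_, ?_⟩
  · rwa [pf_of_lt σ ha, pf_of_lt σ hb]
  · rw [pf_of_lt σ ha, pf_of_lt σ k.isLt]
    exact Nat.succ_lt_succ hk

end Av321

/-- on 321-avoiding permutations, `den` is the sum of the (1-indexed)
positions of excedances. -/
theorem stmt14 (n : ℕ) (σ : Equiv.Perm (Fin n)) (h : Av321 n (pf σ)) :
    den n (pf σ) = ∑ i ∈ (Finset.range n).filter (fun i => i + 1 < pf σ i), (i + 1) := by
  have hsorted_exc : invL (excL n (pf σ)) = 0 :=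
    invL_eq_zero_of_pairwise_le <| pairwise_le_map_filter_range
      fun _ _ hab hb _ hexc => h.pf_le_of_excedance hab hb hexc
  have hsorted_nexc : invL (nexcL n (pf σ)) = 0 :=
    invL_eq_zero_of_pairwise_le <| pairwise_le_map_filter_range
      fun _ _ hab hb hnexc _ => h.pf_le_of_weak_nonexcedance hab hb hnexc
  rw [den, hsorted_exc, hsorted_nexc, zero_add, zero_add]

end MahonianStats
end

section
/- Setting G(z) = Σ_{σ∈S(231)} q^{mad(σ)} z^{|σ|} (summed over 231-avoiding permutations of all lengths), one has G(z) = 1/(1 − z/(1 − q z · G_q(z))), where G_q(z) denotes the same function with z replaced by qz; equivalently G equals the continued fraction 1/(1 − z/(1 − qz/(1 − qz/(1 − q²z/(1 − q²z/⋯))))) with numerator weights z, qz, qz, q²z, q²z, q³z, …. -/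
namespace MahonianStats

open Finset

open scoped Classical

namespace CF

open Finset List

/-- The finset of value-lists of permutations of `{1,…,n}`. -/
noncomputable def plist (n : ℕ) : Finset (List ℕ) :=
  Finset.univ.image (fun σ : Equiv.Perm (Fin n) => List.ofFn (fun i => ((σ i : Fin n) : ℕ) + 1))

lemma pf_eq_lf {n : ℕ} (σ : Equiv.Perm (Fin n)) :
    pf σ = lf (List.ofFn (fun i => ((σ i : Fin n) : ℕ) + 1)) := by
  funext i
  simp only [pf, lf]
  by_cases h : i < n
  · rw [List.getD_eq_getElem _ _ (by simpa using h)]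
    simp [h]
  · rw [List.getD_eq_default _ _ (by simpa using Nat.le_of_not_lt h)]
    simp [h]

lemma sum_plist {M : Type*} [AddCommMonoid M] (n : ℕ) (F : (ℕ → ℕ) → M) :
    ∑ l ∈ plist n, F (lf l) = ∑ σ : Equiv.Perm (Fin n), F (pf σ) := by
  rw [plist, Finset.sum_image]
  · exact Finset.sum_congr rfl fun σ _ => by rw [pf_eq_lf]
  · intro σ _ τ _ h
    rw [List.ofFn_inj] at h
    ext i
    have := congrFun h i
    omega

lemma mem_plist {n : ℕ} {l : List ℕ} :
    l ∈ plist n ↔ l.length = n ∧ l.Nodup ∧ ∀ x ∈ l, 1 ≤ x ∧ x ≤ n := by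
  constructor
  · rintro hl
    simp only [plist, Finset.mem_image] at hl
    obtain ⟨σ, -, rfl⟩ := hl
    refine ⟨by simp, ?_, ?_⟩
    · rw [List.nodup_ofFn]
      intro i j h
      simp only at h
      exact σ.injective (Fin.ext (by omega))
    · intro x hx
      simp only [List.mem_ofFn, Set.mem_range] at hx
      obtain ⟨i, rfl⟩ := hx
      have := (σ i).isLt
      omega
  · rintro ⟨hlen, hnd, hbd⟩
    simp only [plist, Finset.mem_image]
    have hlt : ∀ i : Fin n, (i : ℕ) < l.length := fun i => by rw [hlen]; exact i.isLt
    have hget : ∀ i : Fin n, l[(i:ℕ)]'(hlt i) - 1 < n := by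
      intro i
      have h1 : l[(i:ℕ)]'(hlt i) ∈ l := List.getElem_mem _
      have := hbd _ h1
      omega
    set φ : Fin n → Fin n := fun i => ⟨l[(i:ℕ)]'(hlt i) - 1, hget i⟩ with hφ
    have hinj : Function.Injective φ := by
      intro i j h
      simp only [hφ, Fin.mk.injEq] at h
      have h1 := hbd _ (List.getElem_mem (hlt i))
      have h2 := hbd _ (List.getElem_mem (hlt j))
      have heq : l[(i:ℕ)]'(hlt i) = l[(j:ℕ)]'(hlt j) := by omega
      have := List.nodup_iff_injective_getElem.mp hnd
        (a₁ := ⟨i, hlt i⟩) (a₂ := ⟨j, hlt j⟩) heq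
      simpa [Fin.ext_iff] using this
    refine ⟨Equiv.ofBijective φ (Finite.injective_iff_bijective.mp hinj), Finset.mem_univ _, ?_⟩
    apply List.ext_getElem (by simp [hlen])
    intro i h1 h2
    rw [List.getElem_ofFn]
    show (φ _ : ℕ) + 1 = _
    simp only [hφ]
    have := hbd _ (List.getElem_mem h2)
    omega

lemma plist_perm_range' {n : ℕ} {l : List ℕ} (hl : l ∈ plist n) :
    l.Perm (List.range' 1 n) := by
  obtain ⟨hlen, hnd, hbd⟩ := mem_plist.mp hl
  have hsub : l ⊆ List.range' 1 n := by
    intro x hx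
    have := hbd x hx
    rw [List.mem_range'_1]
    omega
  exact (List.subperm_of_subset hnd hsub).perm_of_length_le (by simp [hlen])

end CF
namespace CF
open Finset List

lemma lf_cons_zero (v : ℕ) (t : List ℕ) : lf (v :: t) 0 = v := rfl

lemma lf_cons_succ (v : ℕ) (t : List ℕ) (i : ℕ) : lf (v :: t) (i + 1) = lf t i := rfl

lemma lf_lt_length {l : List ℕ} {i : ℕ} (h : i < l.length) : lf l i = l[i] :=
  List.getD_eq_getElem _ _ h

lemma lf_mem {l : List ℕ} {i : ℕ} (h : i < l.length) : lf l i ∈ l := by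
  rw [lf_lt_length h]; exact List.getElem_mem _

lemma lf_append_left {A B : List ℕ} {i : ℕ} (h : i < A.length) :
    lf (A ++ B) i = lf A i := by
  rw [lf_lt_length (by simp; omega), lf_lt_length h]
  exact List.getElem_append_left h

lemma lf_append_right (A B : List ℕ) (i : ℕ) :
    lf (A ++ B) (A.length + i) = lf B i := by
  unfold lf
  by_cases h : i < B.length
  · rw [List.getD_eq_getElem _ _ (by simp; omega), List.getD_eq_getElem _ _ h]
    rw [List.getElem_append_right (by omega)]
    congr 1
    omega
  · rw [List.getD_eq_default _ _ (by simp; omega), List.getD_eq_default _ _ (by omega)]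

lemma lf_map_add {B : List ℕ} {v i : ℕ} (h : i < B.length) :
    lf (B.map (· + v)) i = lf B i + v := by
  rw [lf_lt_length (by simpa using h), lf_lt_length h]
  simp

/-- `card` of a positional filter equals `countP`. -/
lemma card_filter_lf (p : ℕ → Prop) [DecidablePred p] (l : List ℕ) :
    ((Finset.range l.length).filter (fun i => p (lf l i))).card
      = l.countP (fun x => decide (p x)) := by
  induction l with
  | nil => simp
  | cons x xs ih =>
      rw [Finset.card_filter, List.length_cons, Finset.sum_range_succ']
      rw [List.countP_cons]
      simp only [lf_cons_succ, lf_cons_zero]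
      rw [Finset.card_filter] at ih
      simp only [decide_eq_true_eq]
      exact congrArg (· + (if p x then 1 else 0)) ih

lemma countP_range' (v n : ℕ) (hv1 : 1 ≤ v) (hvn : v ≤ n) :
    (List.range' 1 n).countP (fun x => decide (v < x)) = n - v := by
  induction n with
  | zero => omega
  | succ m ih =>
      rw [List.range'_concat, List.countP_append]
      by_cases h : v ≤ m
      · have hone : List.countP (fun x => decide (v < x)) [1 + 1 * m] = 1 := by
          have hlt : v < 1 + 1 * m := by omega
          simp [List.countP_cons]
          omega
        rw [ih h, hone]
        omega
      · have hvm : v = m + 1 := by omega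
        subst hvm
        have hz : (List.range' 1 m).countP (fun x => decide (m + 1 < x)) = 0 := by
          rw [List.countP_eq_zero]
          intro x hx
          rw [List.mem_range'_1] at hx
          simp
          omega
        rw [hz]
        simp
        omega

lemma grt_eq {n : ℕ} {l : List ℕ} (hl : l ∈ plist n) (hn : 1 ≤ n) :
    ((Finset.range n).filter (fun k => lf l 0 < lf l k)).card = n - lf l 0 := by
  obtain ⟨hlen, -, hbd⟩ := mem_plist.mp hl
  have h0 : lf l 0 ∈ l := lf_mem (by omega)
  have hb := hbd _ h0
  calc ((Finset.range n).filter (fun k => lf l 0 < lf l k)).card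
      = l.countP (fun x => decide (lf l 0 < x)) := by
        rw [← hlen, card_filter_lf]
    _ = (List.range' 1 n).countP (fun x => decide (lf l 0 < x)) :=
        (plist_perm_range' hl).countP_eq _
    _ = n - lf l 0 := countP_range' _ _ hb.1 hb.2

lemma sum_range_add' {M : Type*} [AddCommMonoid M] (F : ℕ → M) (p q : ℕ) :
    ∑ i ∈ Finset.range (p + q), F i
      = ∑ i ∈ Finset.range p, F i + ∑ j ∈ Finset.range q, F (p + j) := by
  induction q with
  | zero => simp
  | succ m ih => rw [← Nat.add_assoc, Finset.sum_range_succ, ih, Finset.sum_range_succ,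
      add_assoc]

/-- three-region split of `range (a + c + 1)` : `0`, `1+i (i<a)`, `a+1+j (j<c)`. -/
lemma split3 {M : Type*} [AddCommMonoid M] (F : ℕ → M) (a c : ℕ) :
    ∑ i ∈ Finset.range (a + c + 1), F i
      = F 0 + ∑ i ∈ Finset.range a, F (i + 1) + ∑ j ∈ Finset.range c, F (a + 1 + j) := by
  rw [Finset.sum_range_succ', sum_range_add']
  have : ∀ j, F (a + j + 1) = F (a + 1 + j) := fun j => by ring_nf
  rw [Finset.sum_congr rfl fun j _ => this j]
  abel

end CF
namespace CF
open Finset List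

/-- composition of a pair into one permutation list: `(a+1) :: A ++ (B + (a+1))`. -/
def comb (a : ℕ) (A B : List ℕ) : List ℕ := (a + 1) :: (A ++ B.map (· + (a + 1)))

section Comb

variable {a c : ℕ} {A B : List ℕ}

lemma lenA (hA : A ∈ plist a) : A.length = a := (mem_plist.mp hA).1
lemma lenB (hB : B ∈ plist c) : B.length = c := (mem_plist.mp hB).1

lemma comb_length (hA : A ∈ plist a) (hB : B ∈ plist c) : (comb a A B).length = a + c + 1 := by
  simp [comb, lenA hA, lenB hB]
  try omega

lemma comb_lf0 : lf (comb a A B) 0 = a + 1 := rfl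

lemma comb_lfA (hA : A ∈ plist a) {i : ℕ} (hi : i < a) : lf (comb a A B) (i + 1) = lf A i := by
  rw [comb, lf_cons_succ, lf_append_left (by rw [lenA hA]; exact hi)]

lemma comb_lfB (hA : A ∈ plist a) (hB : B ∈ plist c) {j : ℕ} (hj : j < c) : lf (comb a A B) (a + 1 + j) = lf B j + (a + 1) := by
  have : a + 1 + j = (a + j) + 1 := by omega
  rw [comb, this, lf_cons_succ]
  have h2 : a + j = A.length + j := by rw [lenA hA]
  rw [h2, lf_append_right, lf_map_add (by rw [lenB hB]; exact hj)]

lemma vA (hA : A ∈ plist a) {i : ℕ} (hi : i < a) : 1 ≤ lf A i ∧ lf A i ≤ a :=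
  (mem_plist.mp hA).2.2 _ (lf_mem (by rw [lenA hA]; exact hi))

lemma vB (hB : B ∈ plist c) {j : ℕ} (hj : j < c) : 1 ≤ lf B j ∧ lf B j ≤ c :=
  (mem_plist.mp hB).2.2 _ (lf_mem (by rw [lenB hB]; exact hj))

lemma des_eq_sum (n : ℕ) (f : ℕ → ℕ) :
    des n f = ∑ i ∈ Finset.range (n - 1), if f (i + 1) < f i then 1 else 0 := by
  rw [des, desSet, Finset.card_filter]

lemma des_comb (hA : A ∈ plist a) (hB : B ∈ plist c) :
    des (a + c + 1) (lf (comb a A B))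
      = des a (lf A) + des c (lf B) + (if a = 0 then 0 else 1) := by
  set f := lf (comb a A B) with hf
  rw [des_eq_sum]
  have hn : a + c + 1 - 1 = a + c := by omega
  rw [hn, sum_range_add']
  have hregA : ∑ i ∈ Finset.range a, (if f (i + 1) < f i then 1 else 0)
      = des a (lf A) + (if a = 0 then 0 else 1) := by
    rcases a with _ | a'
    · simp [des, desSet]
    · rw [Finset.sum_range_succ']
      have h0 : (if f (0 + 1) < f 0 then 1 else 0) = 1 := by
        rw [if_pos]
        rw [hf, comb_lf0, comb_lfA hA (by omega)]
        have := (vA hA (i := 0) (by omega)).2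
        omega
      have hsh : ∀ i ∈ Finset.range a', (if f (i + 1 + 1) < f (i + 1) then 1 else 0)
          = (if lf A (i + 1) < lf A i then 1 else 0) := by
        intro i hi
        rw [Finset.mem_range] at hi
        rw [hf, comb_lfA hA (by omega), comb_lfA hA (by omega)]
      rw [Finset.sum_congr rfl hsh, h0, des_eq_sum]
      simp
  have hregB : ∑ j ∈ Finset.range c, (if f (a + j + 1) < f (a + j) then 1 else 0)
      = des c (lf B) := by
    rcases c with _ | c'
    · simp [des, desSet]
    · rw [Finset.sum_range_succ']
      have h0 : (if f (a + 0 + 1) < f (a + 0) then 1 else 0) = 0 := by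
        rw [if_neg]
        have h1 : f (a + 0 + 1) = lf B 0 + (a + 1) := by
          rw [hf]
          have : a + 0 + 1 = a + 1 + 0 := by omega
          rw [this, comb_lfB hA hB (by omega)]
        have h2 : f (a + 0) ≤ a + 1 := by
          rcases Nat.eq_zero_or_pos a with h | h
          · subst h; rw [hf]; simp [comb_lf0]
          · have : a + 0 = (a - 1) + 1 := by omega
            rw [hf, this, comb_lfA hA (by omega)]
            have := (vA hA (i := a - 1) (by omega)).2
            omega
        have := (vB hB (j := 0) (by omega)).1
        omega
      have hsh : ∀ j ∈ Finset.range c', (if f (a + (j + 1) + 1) < f (a + (j + 1)) then 1 else 0)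
          = (if lf B (j + 1) < lf B j then 1 else 0) := by
        intro j hj
        rw [Finset.mem_range] at hj
        have e1 : a + (j + 1) + 1 = a + 1 + (j + 1) := by omega
        have e2 : a + (j + 1) = a + 1 + j := by omega
        rw [hf, e1, e2, comb_lfB hA hB (by omega), comb_lfB hA hB (by omega)]
        simp
      rw [Finset.sum_congr rfl hsh, h0, des_eq_sum]
      simp
  rw [hregA, hregB]
  omega

end Comb
end CF
namespace CF
open Finset List

lemma p31_2_eq_sum (n : ℕ) (f : ℕ → ℕ) :
    p31_2 n f = ∑ x ∈ Finset.range n, ∑ y ∈ Finset.range n,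
      if x + 1 < y ∧ f (x + 1) < f y ∧ f y < f x then 1 else 0 := by
  rw [p31_2, Finset.card_filter, Finset.sum_product]

lemma p2_31_eq_sum (n : ℕ) (f : ℕ → ℕ) :
    p2_31 n f = ∑ x ∈ Finset.range n, ∑ y ∈ Finset.range n,
      if x < y ∧ y + 1 < n ∧ f (y + 1) < f x ∧ f x < f y then 1 else 0 := by
  rw [p2_31, Finset.card_filter, Finset.sum_product]

section Comb2

variable {a c : ℕ} {A B : List ℕ}

lemma p31_comb (hA : A ∈ plist a) (hB : B ∈ plist c) :
    p31_2 (a + c + 1) (lf (comb a A B))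
      = p31_2 a (lf A) + p31_2 c (lf B) + (if a = 0 then 0 else a - lf A 0) := by
  have f0 : lf (comb a A B) 0 = a + 1 := comb_lf0
  have fA : ∀ i, i < a → lf (comb a A B) (i + 1) = lf A i := fun i hi => comb_lfA hA hi
  have fB : ∀ j, j < c → lf (comb a A B) (a + 1 + j) = lf B j + (a + 1) :=
    fun j hj => comb_lfB hA hB hj
  set f := lf (comb a A B) with hf
  rw [p31_2_eq_sum]
  rw [split3 (fun x => ∑ y ∈ Finset.range (a + c + 1),
      if x + 1 < y ∧ f (x + 1) < f y ∧ f y < f x then 1 else 0) a c]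

  have H0 : (∑ y ∈ Finset.range (a + c + 1),
      if 0 + 1 < y ∧ f (0 + 1) < f y ∧ f y < f 0 then 1 else 0)
      = (if a = 0 then 0 else a - lf A 0) := by
    rw [split3]
    have t0 : (if 0 + 1 < 0 ∧ f (0 + 1) < f 0 ∧ f 0 < f 0 then 1 else 0) = 0 :=
      if_neg (by omega)
    have tB : (∑ j ∈ Finset.range c,
        if 0 + 1 < a + 1 + j ∧ f (0 + 1) < f (a + 1 + j) ∧ f (a + 1 + j) < f 0 then 1 else 0)
        = 0 := by
      refine Finset.sum_eq_zero fun j hj => if_neg ?_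
      rw [Finset.mem_range] at hj
      rintro ⟨-, -, h3⟩
      rw [fB j hj, f0] at h3
      omega
    have tA : (∑ k ∈ Finset.range a,
        if 0 + 1 < k + 1 ∧ f (0 + 1) < f (k + 1) ∧ f (k + 1) < f 0 then 1 else 0)
        = (if a = 0 then 0 else a - lf A 0) := by
      rcases Nat.eq_zero_or_pos a with ha | ha
      · subst ha; simp
      · rw [if_neg (by omega)]
        have hcg : ∀ k ∈ Finset.range a,
            (if 0 + 1 < k + 1 ∧ f (0 + 1) < f (k + 1) ∧ f (k + 1) < f 0 then 1 else 0)
            = (if lf A 0 < lf A k then 1 else 0) := by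
          intro k hk
          rw [Finset.mem_range] at hk
          congr 1
          rw [eq_iff_iff]
          constructor
          · rintro ⟨h1, h2, -⟩
            rwa [show (0:ℕ) + 1 = 0 + 1 from rfl, fA 0 (by omega), fA k hk] at h2
          · intro h
            have hk0 : 0 < k := by
              rcases Nat.eq_zero_or_pos k with rfl | h'
              · exact absurd h (lt_irrefl _)
              · exact h'
            refine ⟨by omega, ?_, ?_⟩
            · rwa [fA 0 (by omega), fA k hk]
            · rw [fA k hk, f0]
              have := (vA hA hk).2
              omega
        rw [Finset.sum_congr rfl hcg, ← Finset.card_filter, grt_eq hA ha]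
    rw [t0, tA, tB]
    omega
  have HA : (∑ i ∈ Finset.range a, ∑ y ∈ Finset.range (a + c + 1),
      if i + 1 + 1 < y ∧ f (i + 1 + 1) < f y ∧ f y < f (i + 1) then 1 else 0)
      = p31_2 a (lf A) := by
    have hsp : ∀ i ∈ Finset.range a, (∑ y ∈ Finset.range (a + c + 1),
        if i + 1 + 1 < y ∧ f (i + 1 + 1) < f y ∧ f y < f (i + 1) then 1 else 0)
        = ∑ k ∈ Finset.range a,
            if i + 1 < k ∧ lf A (i + 1) < lf A k ∧ lf A k < lf A i then 1 else 0 := by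
      intro i hi
      rw [Finset.mem_range] at hi
      rw [split3]
      have t0 : (if i + 1 + 1 < 0 ∧ f (i + 1 + 1) < f 0 ∧ f 0 < f (i + 1) then 1 else 0) = 0 :=
        if_neg (by omega)
      have tB : (∑ j ∈ Finset.range c, if i + 1 + 1 < a + 1 + j ∧ f (i + 1 + 1) < f (a + 1 + j)
          ∧ f (a + 1 + j) < f (i + 1) then 1 else 0) = 0 := by
        refine Finset.sum_eq_zero fun j hj => if_neg ?_
        rw [Finset.mem_range] at hj
        rintro ⟨-, -, h3⟩
        rw [fB j hj, fA i hi] at h3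
        have := (vA hA hi).2
        omega
      have tA : (∑ k ∈ Finset.range a, if i + 1 + 1 < k + 1 ∧ f (i + 1 + 1) < f (k + 1)
          ∧ f (k + 1) < f (i + 1) then 1 else 0)
          = ∑ k ∈ Finset.range a,
            if i + 1 < k ∧ lf A (i + 1) < lf A k ∧ lf A k < lf A i then 1 else 0 := by
        refine Finset.sum_congr rfl fun k hk => ?_
        rw [Finset.mem_range] at hk
        congr 1
        rw [eq_iff_iff]
        constructor
        · rintro ⟨h1, h2, h3⟩
          have hi1 : i + 1 < a := by omega
          rw [fA (i + 1) hi1, fA k hk] at h2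
          rw [fA k hk, fA i hi] at h3
          exact ⟨by omega, h2, h3⟩
        · rintro ⟨h1, h2, h3⟩
          have hi1 : i + 1 < a := by omega
          rw [← fA (i + 1) hi1, ← fA k hk] at h2
          rw [← fA k hk, ← fA i hi] at h3
          exact ⟨by omega, h2, h3⟩
      rw [t0, tA, tB]
      omega
    rw [Finset.sum_congr rfl hsp, p31_2_eq_sum]
  have HB : (∑ j ∈ Finset.range c, ∑ y ∈ Finset.range (a + c + 1),
      if a + 1 + j + 1 < y ∧ f (a + 1 + j + 1) < f y ∧ f y < f (a + 1 + j) then 1 else 0)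
      = p31_2 c (lf B) := by
    have hsp : ∀ i ∈ Finset.range c, (∑ y ∈ Finset.range (a + c + 1),
        if a + 1 + i + 1 < y ∧ f (a + 1 + i + 1) < f y ∧ f y < f (a + 1 + i) then 1 else 0)
        = ∑ k ∈ Finset.range c,
            if i + 1 < k ∧ lf B (i + 1) < lf B k ∧ lf B k < lf B i then 1 else 0 := by
      intro i hi
      rw [Finset.mem_range] at hi
      rw [split3]
      have t0 : (if a + 1 + i + 1 < 0 ∧ f (a + 1 + i + 1) < f 0 ∧ f 0 < f (a + 1 + i)
          then 1 else 0) = 0 := if_neg (by omega)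
      have tA : (∑ k ∈ Finset.range a, if a + 1 + i + 1 < k + 1 ∧ f (a + 1 + i + 1) < f (k + 1)
          ∧ f (k + 1) < f (a + 1 + i) then 1 else 0) = 0 := by
        refine Finset.sum_eq_zero fun k hk => if_neg ?_
        rw [Finset.mem_range] at hk
        rintro ⟨h1, -, -⟩
        omega
      have tB : (∑ k ∈ Finset.range c, if a + 1 + i + 1 < a + 1 + k ∧ f (a + 1 + i + 1)
          < f (a + 1 + k) ∧ f (a + 1 + k) < f (a + 1 + i) then 1 else 0)
          = ∑ k ∈ Finset.range c,
            if i + 1 < k ∧ lf B (i + 1) < lf B k ∧ lf B k < lf B i then 1 else 0 := by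
        refine Finset.sum_congr rfl fun k hk => ?_
        rw [Finset.mem_range] at hk
        congr 1
        rw [eq_iff_iff]
        constructor
        · rintro ⟨h1, h2, h3⟩
          have hi1 : i + 1 < c := by omega
          have e1 : a + 1 + i + 1 = a + 1 + (i + 1) := by omega
          rw [e1, fB (i + 1) hi1, fB k hk] at h2
          rw [fB k hk, fB i hi] at h3
          exact ⟨by omega, by omega, by omega⟩
        · rintro ⟨h1, h2, h3⟩
          have hi1 : i + 1 < c := by omega
          have e1 : a + 1 + i + 1 = a + 1 + (i + 1) := by omega
          refine ⟨by omega, ?_, ?_⟩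
          · rw [e1, fB (i + 1) hi1, fB k hk]; omega
          · rw [fB k hk, fB i hi]; omega
      rw [t0, tA, tB]
      omega
    rw [Finset.sum_congr rfl hsp, p31_2_eq_sum]
  rw [H0, HA, HB]
  omega

end Comb2
end CF
namespace CF
open Finset List

section Comb3

variable {a c : ℕ} {A B : List ℕ}

lemma p2_31_comb (hA : A ∈ plist a) (hB : B ∈ plist c) :
    p2_31 (a + c + 1) (lf (comb a A B)) = p2_31 a (lf A) + p2_31 c (lf B) := by
  have f0 : lf (comb a A B) 0 = a + 1 := comb_lf0
  have fA : ∀ i, i < a → lf (comb a A B) (i + 1) = lf A i := fun i hi => comb_lfA hA hi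
  have fB : ∀ j, j < c → lf (comb a A B) (a + 1 + j) = lf B j + (a + 1) :=
    fun j hj => comb_lfB hA hB hj
  set f := lf (comb a A B) with hf
  rw [p2_31_eq_sum]
  rw [split3 (fun x => ∑ y ∈ Finset.range (a + c + 1),
      if x < y ∧ y + 1 < a + c + 1 ∧ f (y + 1) < f x ∧ f x < f y then 1 else 0) a c]
  have H0 : (∑ y ∈ Finset.range (a + c + 1),
      if 0 < y ∧ y + 1 < a + c + 1 ∧ f (y + 1) < f 0 ∧ f 0 < f y then 1 else 0) = 0 := by
    rw [split3]
    have t0 : (if 0 < 0 ∧ 0 + 1 < a + c + 1 ∧ f (0 + 1) < f 0 ∧ f 0 < f 0 then 1 else 0) = 0 :=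
      if_neg (by omega)
    have tA : (∑ k ∈ Finset.range a,
        if 0 < k + 1 ∧ k + 1 + 1 < a + c + 1 ∧ f (k + 1 + 1) < f 0 ∧ f 0 < f (k + 1)
        then 1 else 0) = 0 := by
      refine Finset.sum_eq_zero fun k hk => if_neg ?_
      rw [Finset.mem_range] at hk
      rintro ⟨-, -, -, h4⟩
      rw [f0, fA k hk] at h4
      have := (vA hA hk).2
      omega
    have tB : (∑ j ∈ Finset.range c,
        if 0 < a + 1 + j ∧ a + 1 + j + 1 < a + c + 1 ∧ f (a + 1 + j + 1) < f 0 ∧ f 0 < f (a + 1 + j)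
        then 1 else 0) = 0 := by
      refine Finset.sum_eq_zero fun j hj => if_neg ?_
      rw [Finset.mem_range] at hj
      rintro ⟨-, h2, h3, -⟩
      have hj1 : j + 1 < c := by omega
      have e1 : a + 1 + j + 1 = a + 1 + (j + 1) := by omega
      rw [e1, fB (j + 1) hj1, f0] at h3
      omega
    rw [t0, tA, tB]
  have HA : (∑ i ∈ Finset.range a, ∑ y ∈ Finset.range (a + c + 1),
      if i + 1 < y ∧ y + 1 < a + c + 1 ∧ f (y + 1) < f (i + 1) ∧ f (i + 1) < f y then 1 else 0)
      = p2_31 a (lf A) := by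
    have hsp : ∀ i ∈ Finset.range a, (∑ y ∈ Finset.range (a + c + 1),
        if i + 1 < y ∧ y + 1 < a + c + 1 ∧ f (y + 1) < f (i + 1) ∧ f (i + 1) < f y then 1 else 0)
        = ∑ k ∈ Finset.range a,
            if i < k ∧ k + 1 < a ∧ lf A (k + 1) < lf A i ∧ lf A i < lf A k then 1 else 0 := by
      intro i hi
      rw [Finset.mem_range] at hi
      rw [split3]
      have t0 : (if i + 1 < 0 ∧ 0 + 1 < a + c + 1 ∧ f (0 + 1) < f (i + 1) ∧ f (i + 1) < f 0
          then 1 else 0) = 0 := if_neg (by omega)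
      have tB : (∑ j ∈ Finset.range c, if i + 1 < a + 1 + j ∧ a + 1 + j + 1 < a + c + 1
          ∧ f (a + 1 + j + 1) < f (i + 1) ∧ f (i + 1) < f (a + 1 + j) then 1 else 0) = 0 := by
        refine Finset.sum_eq_zero fun j hj => if_neg ?_
        rw [Finset.mem_range] at hj
        rintro ⟨-, h2, h3, -⟩
        have hj1 : j + 1 < c := by omega
        have e1 : a + 1 + j + 1 = a + 1 + (j + 1) := by omega
        rw [e1, fB (j + 1) hj1, fA i hi] at h3
        have := (vA hA hi).2
        omega
      have tA : (∑ k ∈ Finset.range a, if i + 1 < k + 1 ∧ k + 1 + 1 < a + c + 1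
          ∧ f (k + 1 + 1) < f (i + 1) ∧ f (i + 1) < f (k + 1) then 1 else 0)
          = ∑ k ∈ Finset.range a,
            if i < k ∧ k + 1 < a ∧ lf A (k + 1) < lf A i ∧ lf A i < lf A k then 1 else 0 := by
        refine Finset.sum_congr rfl fun k hk => ?_
        rw [Finset.mem_range] at hk
        congr 1
        rw [eq_iff_iff]
        constructor
        · rintro ⟨h1, h2, h3, h4⟩
          have hk1 : k + 1 < a := by
            by_contra hcon
            have hka : k + 1 = a := by omega
            rcases Nat.eq_zero_or_pos c with hc | hc
            · omega
            · have e1 : k + 1 + 1 = a + 1 + 0 := by omega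
              rw [e1, fB 0 (by omega), fA i hi] at h3
              have := (vA hA hi).2
              omega
          rw [show k + 1 + 1 = (k + 1) + 1 from rfl, fA (k + 1) hk1] at h3
          rw [fA i hi] at h3
          rw [fA i hi, fA k hk] at h4
          exact ⟨by omega, hk1, h3, h4⟩
        · rintro ⟨h1, h2, h3, h4⟩
          refine ⟨by omega, by omega, ?_, ?_⟩
          · rw [show k + 1 + 1 = (k + 1) + 1 from rfl, fA (k + 1) h2, fA i hi]
            exact h3
          · rw [fA i hi, fA k hk]
            exact h4
      rw [t0, tA, tB]
      omega
    rw [Finset.sum_congr rfl hsp, p2_31_eq_sum]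
  have HB : (∑ j ∈ Finset.range c, ∑ y ∈ Finset.range (a + c + 1),
      if a + 1 + j < y ∧ y + 1 < a + c + 1 ∧ f (y + 1) < f (a + 1 + j) ∧ f (a + 1 + j) < f y
      then 1 else 0) = p2_31 c (lf B) := by
    have hsp : ∀ i ∈ Finset.range c, (∑ y ∈ Finset.range (a + c + 1),
        if a + 1 + i < y ∧ y + 1 < a + c + 1 ∧ f (y + 1) < f (a + 1 + i) ∧ f (a + 1 + i) < f y
        then 1 else 0)
        = ∑ k ∈ Finset.range c,
            if i < k ∧ k + 1 < c ∧ lf B (k + 1) < lf B i ∧ lf B i < lf B k then 1 else 0 := by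
      intro i hi
      rw [Finset.mem_range] at hi
      rw [split3]
      have t0 : (if a + 1 + i < 0 ∧ 0 + 1 < a + c + 1 ∧ f (0 + 1) < f (a + 1 + i)
          ∧ f (a + 1 + i) < f 0 then 1 else 0) = 0 := if_neg (by omega)
      have tA : (∑ k ∈ Finset.range a, if a + 1 + i < k + 1 ∧ k + 1 + 1 < a + c + 1
          ∧ f (k + 1 + 1) < f (a + 1 + i) ∧ f (a + 1 + i) < f (k + 1) then 1 else 0) = 0 := by
        refine Finset.sum_eq_zero fun k hk => if_neg ?_
        rw [Finset.mem_range] at hk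
        rintro ⟨h1, -, -, -⟩
        omega
      have tB : (∑ k ∈ Finset.range c, if a + 1 + i < a + 1 + k ∧ a + 1 + k + 1 < a + c + 1
          ∧ f (a + 1 + k + 1) < f (a + 1 + i) ∧ f (a + 1 + i) < f (a + 1 + k) then 1 else 0)
          = ∑ k ∈ Finset.range c,
            if i < k ∧ k + 1 < c ∧ lf B (k + 1) < lf B i ∧ lf B i < lf B k then 1 else 0 := by
        refine Finset.sum_congr rfl fun k hk => ?_
        rw [Finset.mem_range] at hk
        congr 1
        rw [eq_iff_iff]
        constructor
        · rintro ⟨h1, h2, h3, h4⟩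
          have hk1 : k + 1 < c := by omega
          have e1 : a + 1 + k + 1 = a + 1 + (k + 1) := by omega
          rw [e1, fB (k + 1) hk1, fB i hi] at h3
          rw [fB i hi, fB k hk] at h4
          exact ⟨by omega, hk1, by omega, by omega⟩
        · rintro ⟨h1, h2, h3, h4⟩
          have e1 : a + 1 + k + 1 = a + 1 + (k + 1) := by omega
          refine ⟨by omega, by omega, ?_, ?_⟩
          · rw [e1, fB (k + 1) h2, fB i hi]
            omega
          · rw [fB i hi, fB k hk]
            omega
      rw [t0, tA, tB]
      omega
    rw [Finset.sum_congr rfl hsp, p2_31_eq_sum]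
  rw [H0, HA, HB]
  omega

lemma mad_comb (hA : A ∈ plist a) (hB : B ∈ plist c) :
    mad (a + c + 1) (lf (comb a A B))
      = mad a (lf A) + mad c (lf B) + (if a = 0 then 0 else 1 + (a - lf A 0)) := by
  rw [mad, mad, mad, p2_31_comb hA hB, p31_comb hA hB, des_comb hA hB]
  rcases Nat.eq_zero_or_pos a with ha | ha
  · simp [ha]
    ring
  · rw [if_neg (by omega), if_neg (by omega), if_neg (by omega)]
    ring
end Comb3
end CF
namespace CF
open Finset List

section Comb4

variable {a c : ℕ} {A B : List ℕ}

lemma comb_mem_plist (hA : A ∈ plist a) (hB : B ∈ plist c) :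
    comb a A B ∈ plist (a + c + 1) := by
  obtain ⟨hla, hnda, hba⟩ := mem_plist.mp hA
  obtain ⟨hlb, hndb, hbb⟩ := mem_plist.mp hB
  rw [mem_plist]
  refine ⟨comb_length hA hB, ?_, ?_⟩
  · rw [comb, List.nodup_cons, List.nodup_append]
    refine ⟨?_, hnda, ?_, ?_⟩
    · intro hmem
      rcases List.mem_append.mp hmem with h | h
      · have := hba _ h; omega
      · obtain ⟨y, hy, hyx⟩ := List.mem_map.mp h
        have := hbb _ hy; omega
    · exact List.Nodup.map_on (fun x _ y _ h => by omega) hndb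
    · intro x hx z hmem hxz
      obtain ⟨y, hy, hyx⟩ := List.mem_map.mp hmem
      have := hba _ hx
      have := hbb _ hy
      omega
  · intro x hx
    rw [comb, List.mem_cons, List.mem_append] at hx
    rcases hx with rfl | h | h
    · omega
    · have := hba _ h; omega
    · obtain ⟨y, hy, rfl⟩ := List.mem_map.mp h
      have := hbb _ hy; omega

/-- index trichotomy for `range (a+c+1)`. -/
lemma idx_cases {x : ℕ} (hx : x < a + c + 1) :
    x = 0 ∨ (∃ i, i < a ∧ x = i + 1) ∨ (∃ j, j < c ∧ x = a + 1 + j) := by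
  rcases Nat.eq_zero_or_pos x with rfl | h
  · left; rfl
  · by_cases hxa : x ≤ a
    · exact Or.inr (Or.inl ⟨x - 1, by omega, by omega⟩)
    · exact Or.inr (Or.inr ⟨x - a - 1, by omega, by omega⟩)

lemma av_comb (hA : A ∈ plist a) (hB : B ∈ plist c)
    (hvA : Av231 a (lf A)) (hvB : Av231 c (lf B)) :
    Av231 (a + c + 1) (lf (comb a A B)) := by
  have f0 : lf (comb a A B) 0 = a + 1 := comb_lf0
  have fA : ∀ i, i < a → lf (comb a A B) (i + 1) = lf A i := fun i hi => comb_lfA hA hi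
  have fB : ∀ j, j < c → lf (comb a A B) (a + 1 + j) = lf B j + (a + 1) :=
    fun j hj => comb_lfB hA hB hj
  rintro ⟨i, j, k, hij, hjk, hkn, h1, h2⟩
  -- h1 : f k < f i, h2 : f i < f j
  rcases idx_cases (show i < a + c + 1 by omega) with rfl | ⟨i', hi', rfl⟩ | ⟨i', hi', rfl⟩
  · -- i = 0
    rw [f0] at h1 h2
    rcases idx_cases (show j < a + c + 1 by omega) with rfl | ⟨j', hj', rfl⟩ | ⟨j', hj', rfl⟩
    · omega
    · rw [fA j' hj'] at h2
      have := (vA hA hj').2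
      omega
    · -- j in B region, so k in B region too
      rcases idx_cases hkn with rfl | ⟨k', hk', rfl⟩ | ⟨k', hk', rfl⟩
      · omega
      · omega
      · rw [fB k' hk'] at h1
        omega
  · -- i in A region
    have hfi : lf (comb a A B) (i' + 1) = lf A i' := fA i' hi'
    rcases idx_cases hkn with rfl | ⟨k', hk', rfl⟩ | ⟨k', hk', rfl⟩
    · omega
    · -- k in A region; then j too
      rcases idx_cases (show j < a + c + 1 by omega) with rfl | ⟨j', hj', rfl⟩ | ⟨j', hj', rfl⟩
      · omega
      · rw [hfi, fA j' hj'] at h2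
        rw [hfi, fA k' hk'] at h1
        exact hvA ⟨i', j', k', by omega, by omega, hk', h1, h2⟩
      · omega
    · -- k in B region
      rw [hfi, fB k' hk'] at h1
      have := (vA hA hi').2
      omega
  · -- i in B region: j, k in B region
    rcases idx_cases (show j < a + c + 1 by omega) with rfl | ⟨j', hj', rfl⟩ | ⟨j', hj', rfl⟩
    · omega
    · omega
    · rcases idx_cases hkn with rfl | ⟨k', hk', rfl⟩ | ⟨k', hk', rfl⟩
      · omega
      · omega
      · rw [fB i' hi', fB j' hj'] at h2
        rw [fB i' hi', fB k' hk'] at h1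
        exact hvB ⟨i', j', k', by omega, by omega, hk', by omega, by omega⟩

end Comb4

section Decomp

lemma countP_range'_lt (v n : ℕ) (hv1 : 1 ≤ v) (hvn : v ≤ n) :
    (List.range' 1 n).countP (fun x => decide (x < v)) = v - 1 := by
  induction n with
  | zero => omega
  | succ m ih =>
      rw [List.range'_concat, List.countP_append]
      by_cases h : v ≤ m
      · have hone : List.countP (fun x => decide (x < v)) [1 + 1 * m] = 0 := by
          simp
          omega
        rw [ih h, hone]
        omega
      · have hvm : v = m + 1 := by omega
        subst hvm
        have hall : (List.range' 1 m).countP (fun x => decide (x < m + 1))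
            = (List.range' 1 m).length := by
          rw [List.countP_eq_length]
          intro x hx
          rw [List.mem_range'_1] at hx
          simp
          omega
        rw [hall]
        simp

/-- decomposition of a 231-avoiding permutation list at its first value. -/
lemma decomp {n : ℕ} {l : List ℕ} (hl : l ∈ plist n) (hAv : Av231 n (lf l)) (hn : 1 ≤ n) :
    ∃ a c A B, n = a + c + 1 ∧ A ∈ plist a ∧ B ∈ plist c ∧
      Av231 a (lf A) ∧ Av231 c (lf B) ∧ l = comb a A B := by
  obtain ⟨hlen, hnd, hbd⟩ := mem_plist.mp hl
  have hne : l ≠ [] := by intro h; rw [h] at hlen; simp at hlen; omega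
  set v := lf l 0 with hv
  have hv0 : lf l 0 ∈ l := lf_mem (by omega)
  have hvb := hbd _ hv0
  set t := l.tail with ht
  have hlt : t.length = n - 1 := by rw [ht, List.length_tail, hlen]
  have hcons : l = v :: t := by
    conv_lhs => rw [← List.cons_head_tail hne]
    congr 1
    rw [hv, lf_lt_length (show 0 < l.length by omega)]
    exact (List.getElem_zero _).symm
  have hndt : t.Nodup := by
    rw [hcons, List.nodup_cons] at hnd
    exact hnd.2
  have hvnott : v ∉ t := by
    rw [hcons, List.nodup_cons] at hnd
    exact hnd.1
  -- values of l at positions ≥ 1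
  have hlf_succ : ∀ i, lf l (i + 1) = lf t i := by
    intro i
    rw [hcons]
    rfl
  -- downward-closedness: positions of small values form a prefix
  have hprefix : ∀ i, i < v - 1 → lf t i < v := by
    have hclosed : ∀ i j, i < j → j < n - 1 → lf t j < v → lf t i < v := by
      intro i j hij hjn hjv
      by_contra hge
      have hmem : lf t i ∈ t := lf_mem (by omega)
      have hne' : lf t i ≠ v := fun h => hvnott (h ▸ hmem)
      have hgt : v < lf t i := by omega
      exact hAv ⟨0, i + 1, j + 1, by omega, by omega, by omega,
        by rw [hlf_succ j]; omega, by rw [hlf_succ i]; omega⟩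
    set S := (Finset.range (n - 1)).filter (fun i => lf t i < v) with hS
    have hcard : S.card = v - 1 := by
      have h1 : S.card = t.countP (fun x => decide (x < v)) := by
        rw [hS, ← hlt]
        exact card_filter_lf (fun x => x < v) t
      have h2 : t.countP (fun x => decide (x < v)) = l.countP (fun x => decide (x < v)) := by
        rw [hcons, List.countP_cons]
        simp
      have h3 : l.countP (fun x => decide (x < v))
          = (List.range' 1 n).countP (fun x => decide (x < v)) :=
        (plist_perm_range' hl).countP_eq _
      rw [h1, h2, h3, countP_range'_lt v n hvb.1 hvb.2]
    intro i hi
    by_contra hge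
    have hnotin : i ∉ S := by
      rw [hS, Finset.mem_filter]
      intro h
      exact hge h.2
    have hsub : S ⊆ Finset.range i := by
      intro j hj
      rw [Finset.mem_range]
      by_contra hge'
      have hij : i < j ∨ i = j := by omega
      rcases hij with hij | rfl
      · rw [hS, Finset.mem_filter, Finset.mem_range] at hj
        exact hge (hclosed i j hij hj.1 hj.2)
      · exact hnotin hj
    have := Finset.card_le_card hsub
    rw [hcard, Finset.card_range] at this
    omega
  set a := v - 1 with ha
  set c := n - v with hc
  have hacn : n = a + c + 1 := by omega
  set A := t.take a with hA'
  set B0 := t.drop a with hB0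
  set B := B0.map (· - v) with hB'
  have hlA : A.length = a := by
    rw [hA', List.length_take]
    omega
  have hlB0 : B0.length = c := by
    rw [hB0, List.length_drop]
    omega
  have htsubl : ∀ x ∈ t, x ∈ l := by
    intro x hx
    rw [hcons]
    exact List.mem_cons_of_mem _ hx
  -- elements of A
  have hAelem : ∀ x ∈ A, 1 ≤ x ∧ x < v := by
    intro x hx
    rw [hA'] at hx
    obtain ⟨i, hi, rfl⟩ := List.mem_iff_getElem.mp hx
    have hia : i < a := by rw [List.length_take] at hi; omega
    have hit : i < t.length := by omega
    have h1 : (t.take a)[i] = t[i]'hit := List.getElem_take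
    have h2 : lf t i = t[i]'hit := lf_lt_length _
    have h3 : t[i]'hit ∈ l := htsubl _ (List.getElem_mem _)
    have h4 := hbd _ h3
    have h5 := hprefix i hia
    omega
  have hAmem : A ∈ plist a := by
    rw [mem_plist]
    refine ⟨hlA, (List.take_sublist _ _).nodup hndt, ?_⟩
    intro x hx
    have := hAelem x hx
    omega
  -- elements of B0 are > v
  have hB0elem : ∀ x ∈ B0, v < x ∧ x ≤ n := by
    have hcount : t.countP (fun x => decide (x < v)) = v - 1 := by
      have h2 : t.countP (fun x => decide (x < v)) = l.countP (fun x => decide (x < v)) := by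
        rw [hcons, List.countP_cons]; simp
      rw [h2, (plist_perm_range' hl).countP_eq, countP_range'_lt v n hvb.1 hvb.2]
    have hsplit : t.countP (fun x => decide (x < v))
        = A.countP (fun x => decide (x < v)) + B0.countP (fun x => decide (x < v)) := by
      conv_lhs => rw [← List.take_append_drop a t]
      rw [List.countP_append]
    have hAcount : A.countP (fun x => decide (x < v)) = v - 1 := by
      have : A.countP (fun x => decide (x < v)) = A.length := by
        rw [List.countP_eq_length]
        intro x hx
        simpa using (hAelem x hx).2
      rw [this, hlA]
    have hB0count : B0.countP (fun x => decide (x < v)) = 0 := by omega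
    intro x hx
    have hxt : x ∈ t := by
      rw [← List.take_append_drop a t]
      exact List.mem_append_right _ hx
    have hxl : x ∈ l := htsubl _ hxt
    have hxb := hbd _ hxl
    have hxnlt : ¬ (x < v) := by
      have := List.countP_eq_zero.mp hB0count x hx
      simpa using this
    have hxne : x ≠ v := fun h => hvnott (h ▸ hxt)
    exact ⟨by omega, hxb.2⟩
  have hBmem : B ∈ plist c := by
    rw [mem_plist]
    refine ⟨by rw [hB', List.length_map, hlB0], ?_, ?_⟩
    · refine List.Nodup.map_on ?_ ((List.drop_sublist _ _).nodup hndt)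
      intro x hx y hy hxy
      have := (hB0elem x hx).1
      have := (hB0elem y hy).1
      omega
    · intro x hx
      obtain ⟨y, hy, rfl⟩ := List.mem_map.mp hx
      have := hB0elem y hy
      omega
  have hcomb : l = comb a A B := by
    rw [comb]
    have hv1 : a + 1 = v := by omega
    have hmap : B.map (· + (a + 1)) = B0 := by
      rw [hB', List.map_map]
      have : ∀ y ∈ B0, ((fun x => x + (a + 1)) ∘ (fun x => x - v)) y = id y := by
        intro y hy
        have := (hB0elem y hy).1
        simp only [Function.comp, id]
        omega
      rw [List.map_congr_left this, List.map_id]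
    rw [hmap, hA', hB0, List.take_append_drop, hv1]
    exact hcons
  -- lf of parts in terms of lf l
  have hlfA : ∀ i, i < a → lf A i = lf l (i + 1) := by
    intro i hi
    rw [hlf_succ]
    have hit : i < t.length := by omega
    have hiA : i < A.length := by omega
    have e1 : lf A i = A[i]'hiA := lf_lt_length _
    have e2 : lf t i = t[i]'hit := lf_lt_length _
    have e3 : A[i]'hiA = t[i]'hit := by
      simp only [hA']
      exact List.getElem_take
    omega
  have hlfB : ∀ j, j < c → lf B j + v = lf l (a + 1 + j) := by
    intro j hj
    have e1 : a + 1 + j = (a + j) + 1 := by omega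
    rw [e1, hlf_succ]
    have h1 : lf B j = lf B0 j - v := by
      rw [hB', lf_lt_length (by rw [List.length_map]; omega), lf_lt_length (l := B0) (by omega)]
      simp
    have h2 : lf B0 j = lf t (a + j) := by
      have hjB : j < B0.length := by omega
      have hat : a + j < t.length := by omega
      have e1 : lf B0 j = B0[j]'hjB := lf_lt_length _
      have e2 : lf t (a + j) = t[a + j]'hat := lf_lt_length _
      have e3 : B0[j]'hjB = t[a + j]'hat := by
        simp only [hB0]
        exact List.getElem_drop
      omega
    have h3 : lf B0 j ∈ B0 := lf_mem (by omega)
    have := (hB0elem _ h3).1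
    rw [h1, ← h2]
    omega
  have hAvA : Av231 a (lf A) := by
    rintro ⟨i, j, k, hij, hjk, hk, h1, h2⟩
    refine hAv ⟨i + 1, j + 1, k + 1, by omega, by omega, by omega, ?_, ?_⟩
    · rw [← hlfA k hk, ← hlfA i (by omega)]; exact h1
    · rw [← hlfA i (by omega), ← hlfA j (by omega)]; exact h2
  have hAvB : Av231 c (lf B) := by
    rintro ⟨i, j, k, hij, hjk, hk, h1, h2⟩
    refine hAv ⟨a + 1 + i, a + 1 + j, a + 1 + k, by omega, by omega, by omega, ?_, ?_⟩
    · rw [← hlfB k hk, ← hlfB i (by omega)]; omega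
    · rw [← hlfB i (by omega), ← hlfB j (by omega)]; omega
  exact ⟨a, c, A, B, hacn, hAmem, hBmem, hAvA, hAvB, hcomb⟩

end Decomp
end CF
namespace CF
open Finset List Polynomial

/-- 231-avoiding permutation lists. -/
noncomputable def Dn (n : ℕ) : Finset (List ℕ) :=
  (plist n).filter (fun l => Av231 n (lf l))

noncomputable def gl (n : ℕ) : Polynomial ℤ :=
  ∑ l ∈ Dn n, (X : Polynomial ℤ) ^ mad n (lf l)

noncomputable def hl (n : ℕ) : Polynomial ℤ :=
  ∑ l ∈ Dn n, (X : Polynomial ℤ) ^ (mad n (lf l) + (n - lf l 0))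

noncomputable def wp (n : ℕ) : Polynomial ℤ :=
  if n = 0 then 1 else X * hl n

lemma mad_zero (f : ℕ → ℕ) : mad 0 f = 0 := by
  simp [mad, des, desSet, p31_2, p2_31]

lemma Dn_zero : Dn 0 = {[]} := by
  ext l
  simp only [Dn, Finset.mem_filter, Finset.mem_singleton]
  constructor
  · rintro ⟨hp, -⟩
    have := (mem_plist.mp hp).1
    exact List.length_eq_zero_iff.mp this
  · rintro rfl
    refine ⟨mem_plist.mpr ⟨rfl, List.nodup_nil, by simp⟩, ?_⟩
    rintro ⟨i, j, k, -, -, hk, -⟩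
    omega

lemma gl_zero : gl 0 = 1 := by
  rw [gl, Dn_zero]
  simp [mad_zero]

lemma master (θ n : ℕ) (hn : 1 ≤ n) :
    ∑ l ∈ Dn n, (X : Polynomial ℤ) ^ (mad n (lf l) + θ * (n - lf l 0))
      = ∑ a ∈ Finset.range n,
          wp a * ((X : Polynomial ℤ) ^ (θ * (n - 1 - a)) * gl (n - 1 - a)) := by
  have step1 : ∑ l ∈ Dn n, (X : Polynomial ℤ) ^ (mad n (lf l) + θ * (n - lf l 0))
      = ∑ x ∈ (Finset.range n).sigma (fun a => (Dn a) ×ˢ (Dn (n - 1 - a))),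
          (X : Polynomial ℤ) ^ ((mad x.1 (lf x.2.1)
              + (if x.1 = 0 then 0 else 1 + (x.1 - lf x.2.1 0)))
            + θ * (n - 1 - x.1) + mad (n - 1 - x.1) (lf x.2.2)) := by
    refine (Finset.sum_bij (fun x _ => comb x.1 x.2.1 x.2.2) ?_ ?_ ?_ ?_).symm
    · -- maps into Dn n
      rintro ⟨a, A, B⟩ hx
      simp only [Finset.mem_sigma, Finset.mem_product, Finset.mem_range, Dn,
        Finset.mem_filter] at hx ⊢
      obtain ⟨han, ⟨hAp, hAv⟩, hBp, hBv⟩ := hx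
      have hnac : n = a + (n - 1 - a) + 1 := by omega
      constructor
      · rw [hnac]; exact comb_mem_plist hAp hBp
      · rw [hnac]; exact av_comb hAp hBp hAv hBv
    · -- injective
      rintro ⟨a, A, B⟩ hx ⟨a', A', B'⟩ hx' heq
      simp only [Finset.mem_sigma, Finset.mem_product, Finset.mem_range, Dn,
        Finset.mem_filter] at hx hx'
      obtain ⟨han, ⟨hAp, -⟩, hBp, -⟩ := hx
      obtain ⟨han', ⟨hAp', -⟩, hBp', -⟩ := hx'
      simp only [comb, List.cons_eq_cons] at heq
      obtain ⟨h1, h2⟩ := heq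
      have ha : a = a' := by omega
      subst ha
      have hlen : A.length = A'.length := by rw [lenA hAp, lenA hAp']
      obtain ⟨hAe, hBe⟩ := List.append_inj h2 hlen
      have hBeq : B = B' := List.map_injective_iff.mpr (fun x y h => by omega) hBe
      rw [hAe, hBeq]
    · -- surjective
      intro l hl
      simp only [Dn, Finset.mem_filter] at hl
      obtain ⟨a, c, A, B, hacn, hAp, hBp, hAv, hBv, hcomb⟩ :=
        decomp hl.1 hl.2 hn
      refine ⟨⟨a, A, B⟩, ?_, ?_⟩
      · simp only [Finset.mem_sigma, Finset.mem_product, Finset.mem_range, Dn,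
          Finset.mem_filter]
        have hc : n - 1 - a = c := by omega
        exact ⟨by omega, ⟨hAp, hAv⟩, by rw [hc]; exact ⟨hBp, hBv⟩⟩
      · exact hcomb.symm
    · -- weights
      rintro ⟨a, A, B⟩ hx
      simp only [Finset.mem_sigma, Finset.mem_product, Finset.mem_range, Dn,
        Finset.mem_filter] at hx
      obtain ⟨han, ⟨hAp, -⟩, hBp, -⟩ := hx
      have hc : n = a + (n - 1 - a) + 1 := by omega
      have hm : mad n (lf (comb a A B))
          = mad a (lf A) + mad (n - 1 - a) (lf B)
            + (if a = 0 then 0 else 1 + (a - lf A 0)) := by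
        conv_lhs => rw [hc]
        exact mad_comb hAp hBp
      have hh : lf (comb a A B) 0 = a + 1 := comb_lf0
      dsimp only
      congr 1
      rw [hm, hh, show n - (a + 1) = n - 1 - a from by omega]
      omega
  rw [step1, Finset.sum_sigma]
  refine Finset.sum_congr rfl fun a ha => ?_
  rw [Finset.mem_range] at ha
  rw [Finset.sum_product]
  have hinner : ∀ A ∈ Dn a, ∑ B ∈ Dn (n - 1 - a),
      (X : Polynomial ℤ) ^ ((mad a (lf A) + (if a = 0 then 0 else 1 + (a - lf A 0)))
        + θ * (n - 1 - a) + mad (n - 1 - a) (lf B))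
      = (X : Polynomial ℤ) ^ (mad a (lf A) + (if a = 0 then 0 else 1 + (a - lf A 0)))
        * ((X : Polynomial ℤ) ^ (θ * (n - 1 - a)) * gl (n - 1 - a)) := by
    intro A hA
    rw [gl, Finset.mul_sum, Finset.mul_sum]
    refine Finset.sum_congr rfl fun B hB => ?_
    rw [← pow_add, ← pow_add]
    congr 1
    omega
  rw [Finset.sum_congr rfl hinner, ← Finset.sum_mul]
  congr 1
  -- ∑ A ∈ Dn a, X ^ (mad a (lf A) + e) = wp a
  rcases Nat.eq_zero_or_pos a with rfl | ha'
  · rw [wp, if_pos rfl, Dn_zero]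
    simp [mad_zero]
  · rw [wp, if_neg (by omega), hl, Finset.mul_sum]
    refine Finset.sum_congr rfl fun A hA => ?_
    rw [if_neg (by omega), ← pow_succ']
    congr 1
    omega

end CF
open scoped Classical in
noncomputable def Gmad' : PowerSeries (Polynomial ℤ) :=
  PowerSeries.mk fun n =>
    ∑ σ ∈ (Finset.univ : Finset (Equiv.Perm (Fin n))).filter (fun σ => Av231 n (pf σ)),
      (Polynomial.X : Polynomial ℤ) ^ mad n (pf σ)

namespace CF
open Finset List Polynomial

lemma master0 (n : ℕ) (hn : 1 ≤ n) :
    gl n = ∑ a ∈ Finset.range n, wp a * gl (n - 1 - a) := by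
  have h := master 0 n hn
  simp only [Nat.zero_mul, Nat.add_zero, pow_zero, one_mul] at h
  rw [gl]
  exact h

lemma master1 (n : ℕ) (hn : 1 ≤ n) :
    hl n = ∑ a ∈ Finset.range n,
      wp a * ((X : Polynomial ℤ) ^ (n - 1 - a) * gl (n - 1 - a)) := by
  have h := master 1 n hn
  simp only [Nat.one_mul, one_mul] at h
  rw [hl]
  exact h

lemma coeff_Gmad' (n : ℕ) : (PowerSeries.coeff n) Gmad' = gl n := by
  rw [Gmad', PowerSeries.coeff_mk, gl, Dn]
  rw [Finset.sum_filter, Finset.sum_filter]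
  exact (sum_plist n (fun f => if Av231 n f then (X : Polynomial ℤ) ^ mad n f else 0)).symm

noncomputable def Wser : PowerSeries (Polynomial ℤ) := PowerSeries.mk wp

noncomputable def Hser : PowerSeries (Polynomial ℤ) :=
  PowerSeries.mk fun n => if n = 0 then 0 else hl n

lemma S1 : Gmad' = 1 + PowerSeries.X * (Wser * Gmad') := by
  ext n : 1
  rcases n with _ | m
  · simp only [PowerSeries.coeff_zero_eq_constantCoeff, map_add, map_mul,
      PowerSeries.constantCoeff_X, zero_mul, add_zero, map_one]
    rw [← PowerSeries.coeff_zero_eq_constantCoeff, coeff_Gmad', gl_zero]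
  · rw [map_add, PowerSeries.coeff_one, if_neg (by omega), PowerSeries.coeff_succ_X_mul,
      coeff_Gmad', PowerSeries.coeff_mul]
    rw [Finset.Nat.sum_antidiagonal_eq_sum_range_succ_mk]
    rw [master0 (m + 1) (by omega)]
    rw [zero_add]
    refine Finset.sum_congr rfl fun a ha => ?_
    rw [Finset.mem_range] at ha
    rw [Wser, PowerSeries.coeff_mk, coeff_Gmad', show m + 1 - 1 - a = m - a from by omega]

lemma S2 : Hser = PowerSeries.X * (Wser * PowerSeries.rescale X Gmad') := by
  ext n : 1
  rcases n with _ | m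
  · have h1 : (PowerSeries.coeff 0) Hser = 0 := by
      rw [Hser, PowerSeries.coeff_mk]
      simp
    rw [h1, PowerSeries.coeff_zero_eq_constantCoeff]
    simp
  · rw [Hser, PowerSeries.coeff_mk, if_neg (by omega), PowerSeries.coeff_succ_X_mul,
      PowerSeries.coeff_mul, Finset.Nat.sum_antidiagonal_eq_sum_range_succ_mk]
    rw [master1 (m + 1) (by omega)]
    refine Finset.sum_congr rfl fun a ha => ?_
    rw [Finset.mem_range] at ha
    rw [Wser, PowerSeries.coeff_mk, PowerSeries.coeff_rescale, coeff_Gmad',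
      show m + 1 - 1 - a = m - a from by omega]

lemma S3 : Wser = 1 + PowerSeries.C (R := Polynomial ℤ) X * Hser := by
  ext n : 1
  rcases n with _ | m
  · rw [Wser, PowerSeries.coeff_mk, wp, if_pos rfl, map_add, PowerSeries.coeff_one,
      if_pos rfl, PowerSeries.coeff_C_mul, Hser, PowerSeries.coeff_mk, if_pos rfl,
      mul_zero, add_zero]
  · rw [Wser, PowerSeries.coeff_mk, wp, if_neg (by omega), map_add, PowerSeries.coeff_one,
      if_neg (by omega), PowerSeries.coeff_C_mul, Hser, PowerSeries.coeff_mk,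
      if_neg (by omega), zero_add]

end CF

theorem stmt15'' :
    Gmad' * ((1 - PowerSeries.C (R := Polynomial ℤ) Polynomial.X * PowerSeries.X *
          PowerSeries.rescale Polynomial.X Gmad') - PowerSeries.X) =
      1 - PowerSeries.C (R := Polynomial ℤ) Polynomial.X * PowerSeries.X *
          PowerSeries.rescale Polynomial.X Gmad' := by
  have e1 := CF.S1
  have e2 := CF.S2
  have e3 := CF.S3
  linear_combination (1 - PowerSeries.C (R := Polynomial ℤ) Polynomial.X * PowerSeries.X *
      PowerSeries.rescale Polynomial.X Gmad') * e1
    + (PowerSeries.X * Gmad') * e3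
    + (PowerSeries.C (R := Polynomial ℤ) Polynomial.X * PowerSeries.X * Gmad') * e2
open scoped Classical in
/-- The generating function `G(z) = Σ_{σ ∈ S(231)} q^{mad σ} z^{|σ|}`, a formal power
series in `z` with coefficients in `ℤ[q]`. -/
noncomputable def Gmad : PowerSeries (Polynomial ℤ) :=
  PowerSeries.mk fun n =>
    ∑ σ ∈ (Finset.univ : Finset (Equiv.Perm (Fin n))).filter (fun σ => Av231 n (pf σ)),
      (Polynomial.X : Polynomial ℤ) ^ mad n (pf σ)

/-- `G(z) = 1/(1 − z/(1 − q·z·G(qz)))`, written in cleared-denominator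
form `G(z)·((1 − q·z·G(qz)) − z) = 1 − q·z·G(qz)`; iterating this self-similar
identity yields the continued fraction with numerator weights `z, qz, qz, q²z, q²z, …`. -/
theorem stmt15 :
    Gmad * ((1 - PowerSeries.C (R := Polynomial ℤ) Polynomial.X * PowerSeries.X *
          PowerSeries.rescale Polynomial.X Gmad) - PowerSeries.X) =
      1 - PowerSeries.C (R := Polynomial ℤ) Polynomial.X * PowerSeries.X *
          PowerSeries.rescale Polynomial.X Gmad := by
  have h : Gmad = Gmad' := rfl
  rw [h]
  exact stmt15''

end MahonianStats
end
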